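/- arXiv:0809.3546 — 6 statements merged into one kernel-verified Lean document; each statement's English description precedes it below -/
import Mathlib

section
/- Let q be a prime power and let n, m be positive integers and ρ, t nonnegative integers. Let C ⊆ Fq^{n×m} be a set of matrices. Then the fan-out sets Y^{ρ,t}_{x}, x ∈ C, are pairwise disjoint (i.e., Y^{ρ,t}_{x₁} ∩ Y^{ρ,t}_{x₂} = ∅ for all distinct x₁, x₂ ∈ C) if and only if rank(x₁ − x₂) > 2t + ρ for all distinct x₁, x₂ ∈ C. -/
/-!
If `(A, y)` lies in both fan-out sets, then `A (x₁ - x₂) = Z₂ - Z₁` has rank at most `2t`, while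
by Sylvester's inequality multiplying by `A` loses at most `n - rank A ≤ ρ` of the rank of
`x₁ - x₂`. Conversely, if `rank (x₁ - x₂) ≤ ρ + t + t`, split `x₁ - x₂ = D₀ + D₁ + D₂` with ranks
at most `ρ`, `t`, `t`; a matrix `A` of rank at least `n - ρ` annihilating `D₀` then puts
`(A, A x₁ - A D₁) = (A, A x₂ + A D₂)` in both fan-out sets.
-/

set_option autoImplicit false

open Matrix

/-- The fan-out set `Y^{ρ,t}_x`: all pairs `(A, y)` with `rank A ≥ n - ρ` and
`y = A·x + Z` for some `Z` with `rank Z ≤ t`. -/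
def fanOut {F : Type*} [Field F] [Fintype F] {n m : ℕ} (ρ t : ℕ)
    (x : Matrix (Fin n) (Fin m) F) :
    Set (Matrix (Fin n) (Fin n) F × Matrix (Fin n) (Fin m) F) :=
  {p | n - ρ ≤ p.1.rank ∧ ∃ Z : Matrix (Fin n) (Fin m) F, Z.rank ≤ t ∧ p.2 = p.1 * x + Z}

open Module

section LinearMap

open LinearMap

variable {K V W : Type*} [DivisionRing K] [AddCommGroup V] [Module K V] [AddCommGroup W]
  [Module K W] [FiniteDimensional K V]

theorem Submodule.finrank_map_add_finrank_ker_inf (f : V →ₗ[K] W) (p : Submodule K V) :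
    finrank K (p.map f) + finrank K ↥(ker f ⊓ p) = finrank K p := by
  have h := finrank_range_add_finrank_ker (f.domRestrict p)
  rwa [range_domRestrict, ker_domRestrict, ← Submodule.finrank_map_subtype_eq,
    Submodule.map_comap_subtype, inf_comm] at h

theorem Submodule.exists_le_finrank_eq (p : Submodule K V) {k : ℕ} (hk : k ≤ finrank K p) :
    ∃ U ≤ p, finrank K U = k := by
  let b := Module.finBasis K p
  let v : Fin k → V := fun i ↦ b (Fin.castLE hk i)
  have hv : LinearIndependent K v :=
    (b.linearIndependent.map' p.subtype p.ker_subtype).comp _ (Fin.castLE_injective hk)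
  refine ⟨Submodule.span K (Set.range v), ?_, by rw [finrank_span_eq_card hv, Fintype.card_fin]⟩
  rw [Submodule.span_le]
  rintro _ ⟨i, rfl⟩
  exact (b _).2

end LinearMap

namespace Matrix

open LinearMap

variable {K : Type*} [Field K] {l m n : Type*} [Fintype n]

theorem rank_neg {R : Type*} [CommRing R] (A : Matrix m n R) : (-A).rank = A.rank := by
  classical
  rw [rank, rank, ← toLin'_apply', ← toLin'_apply', map_neg, range_neg]

theorem rank_add_le (A B : Matrix m n K) : (A + B).rank ≤ A.rank + B.rank := by
  rw [rank, mulVecLin_add]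
  exact (Submodule.finrank_mono (range_add_le _ _)).trans
    (Submodule.finrank_add_le_finrank_add_finrank _ _)

theorem rank_mul_eq_finrank_map [Fintype m] (A : Matrix l m K) (B : Matrix m n K) :
    (A * B).rank = finrank K ((range B.mulVecLin).map A.mulVecLin) := by
  rw [rank, mulVecLin_mul, range_comp]

theorem rank_add_rank_le_card_add_rank_mul [Fintype m] (A : Matrix l m K) (B : Matrix m n K) :
    A.rank + B.rank ≤ Fintype.card m + (A * B).rank := by
  have h₁ := Submodule.finrank_map_add_finrank_ker_inf A.mulVecLin (range B.mulVecLin)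
  have h₂ := finrank_range_add_finrank_ker A.mulVecLin
  have h₃ := Submodule.finrank_mono (inf_le_left : ker A.mulVecLin ⊓ range B.mulVecLin ≤ _)
  rw [finrank_fintype_fun_eq_card] at h₂
  rw [rank_mul_eq_finrank_map, rank, rank]
  omega

theorem mulVecLin_toMatrix' [DecidableEq n] (f : (n → K) →ₗ[K] m → K) :
    (LinearMap.toMatrix' f).mulVecLin = f := by
  rw [← toLin'_apply', toLin'_toMatrix']

theorem exists_mul_eq_zero_of_rank_le [Fintype m] (B : Matrix m n K) {ρ : ℕ} (hB : B.rank ≤ ρ) :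
    ∃ A : Matrix m m K, Fintype.card m - ρ ≤ A.rank ∧ A * B = 0 := by
  classical
  obtain ⟨W, hW⟩ := Submodule.exists_isCompl (range B.mulVecLin)
  refine ⟨LinearMap.toMatrix' (W.projection _ hW.symm), ?_, ?_⟩
  · have := Submodule.finrank_add_eq_of_isCompl hW
    rw [finrank_fintype_fun_eq_card] at this
    rw [rank, mulVecLin_toMatrix', Submodule.range_projection]
    rw [rank] at hB
    omega
  · have hPB : W.projection _ hW.symm ∘ₗ B.mulVecLin = 0 :=
      range_le_ker_iff.mp (by rw [Submodule.ker_projection])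
    apply toLin'.injective
    rw [toLin'_mul, toLin'_toMatrix', toLin'_apply', hPB, map_zero]

theorem exists_add_eq_of_rank_le_add [Fintype m] (M : Matrix m n K) {a b : ℕ}
    (hM : M.rank ≤ a + b) :
    ∃ M₁ M₂ : Matrix m n K, M₁.rank ≤ a ∧ M₂.rank ≤ b ∧ M₁ + M₂ = M := by
  classical
  obtain ⟨U, hUM, hU⟩ := (range M.mulVecLin).exists_le_finrank_eq (min_le_right a M.rank)
  obtain ⟨W, hUW⟩ := Submodule.exists_isCompl U
  refine ⟨LinearMap.toMatrix' (U.projection W hUW) * M,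
    LinearMap.toMatrix' (W.projection U hUW.symm) * M, ?_, ?_, ?_⟩
  · calc _ ≤ (LinearMap.toMatrix' (U.projection W hUW)).rank := rank_mul_le_left _ _
      _ = finrank K U := by rw [rank, mulVecLin_toMatrix', Submodule.range_projection]
      _ ≤ a := hU ▸ min_le_left _ _
  · have h :=
      Submodule.finrank_map_add_finrank_ker_inf (W.projection U hUW.symm) (range M.mulVecLin)
    rw [Submodule.ker_projection, inf_eq_left.mpr hUM, hU] at h
    rw [rank_mul_eq_finrank_map, mulVecLin_toMatrix']
    have hr : M.rank = finrank K (range M.mulVecLin) := rfl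
    omega
  · rw [← Matrix.add_mul, ← map_add, Submodule.projection_add_projection_eq_id,
      LinearMap.toMatrix'_id, Matrix.one_mul]

end Matrix

section FanOut

variable {F : Type*} [Field F] [Fintype F] {n m ρ t : ℕ} {x₁ x₂ : Matrix (Fin n) (Fin m) F}

theorem rank_sub_le_of_mem_fanOut_inter {A : Matrix (Fin n) (Fin n) F}
    {y : Matrix (Fin n) (Fin m) F}
    (h₁ : (A, y) ∈ fanOut ρ t x₁) (h₂ : (A, y) ∈ fanOut ρ t x₂) :
    (x₁ - x₂).rank ≤ 2 * t + ρ := by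
  obtain ⟨hA, Z₁, hZ₁, hy₁⟩ := h₁
  obtain ⟨-, Z₂, hZ₂, hy₂⟩ := h₂
  dsimp only at hA hy₁ hy₂
  have hAd : A * (x₁ - x₂) = Z₂ + -Z₁ :=
    calc A * (x₁ - x₂) = (A * x₁ + Z₁) - A * x₂ - Z₁ := by rw [Matrix.mul_sub]; abel
      _ = Z₂ + -Z₁ := by rw [← hy₁, hy₂]; abel
  have hAd_rank : (A * (x₁ - x₂)).rank ≤ t + t :=
    hAd ▸ (Matrix.rank_add_le _ _).trans (add_le_add hZ₂ (rank_neg Z₁ ▸ hZ₁))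
  have := rank_add_rank_le_card_add_rank_mul A (x₁ - x₂)
  rw [Fintype.card_fin] at this
  omega

theorem fanOut_inter_nonempty_of_rank_sub_le (h : (x₁ - x₂).rank ≤ 2 * t + ρ) :
    (fanOut ρ t x₁ ∩ fanOut ρ t x₂).Nonempty := by
  obtain ⟨D₀, D, hD₀, hD, hx⟩ := (x₁ - x₂).exists_add_eq_of_rank_le_add (a := ρ) (b := t + t)
    (by omega)
  obtain ⟨D₁, D₂, hD₁, hD₂, rfl⟩ := D.exists_add_eq_of_rank_le_add hD
  obtain ⟨A, hA, hAD₀⟩ := D₀.exists_mul_eq_zero_of_rank_le hD₀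
  rw [Fintype.card_fin] at hA
  refine ⟨(A, A * x₁ - A * D₁), ⟨hA, -(A * D₁), ?_, sub_eq_add_neg _ _⟩,
    ⟨hA, A * D₂, (rank_mul_le_right _ _).trans hD₂, ?_⟩⟩
  · exact (rank_neg (A * D₁)).trans_le ((rank_mul_le_right _ _).trans hD₁)
  · rw [← sub_add_cancel x₁ x₂, ← hx]
    simp only [Matrix.mul_add, hAD₀]
    abel

theorem fanOut_inter_eq_empty_iff :
    fanOut ρ t x₁ ∩ fanOut ρ t x₂ = ∅ ↔ 2 * t + ρ < (x₁ - x₂).rank := by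
  rw [← Set.not_nonempty_iff_eq_empty, ← not_le]
  exact not_congr ⟨fun ⟨_, h₁, h₂⟩ ↦ rank_sub_le_of_mem_fanOut_inter h₁ h₂,
    fanOut_inter_nonempty_of_rank_sub_le⟩

end FanOut

theorem fanOut_pairwise_disjoint_iff_rank_dist_gt_general
    (n m : ℕ) (ρ t : ℕ)
    (F : Type) [Field F] [Fintype F]
    (C : Set (Matrix (Fin n) (Fin m) F)) :
    (∀ x₁ ∈ C, ∀ x₂ ∈ C, x₁ ≠ x₂ → fanOut ρ t x₁ ∩ fanOut ρ t x₂ = ∅) ↔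
      (∀ x₁ ∈ C, ∀ x₂ ∈ C, x₁ ≠ x₂ → 2 * t + ρ < (x₁ - x₂).rank) := by
  simp only [fanOut_inter_eq_empty_iff]

/-- A deterministic encoder with codebook `C` is universally `t`-error-`ρ`-erasure-correcting
(i.e., the fan-out sets of the codewords are pairwise disjoint) if and only if
`rank (x₁ - x₂) > 2t + ρ` for all distinct codewords `x₁, x₂ ∈ C`. -/
theorem fanOut_pairwise_disjoint_iff_rank_dist_gt
    (q : ℕ) (hq : IsPrimePow q) (n m : ℕ) (hn : 0 < n) (hm : 0 < m) (ρ t : ℕ)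
    (F : Type) [Field F] [Fintype F] (hF : Fintype.card F = q)
    (C : Set (Matrix (Fin n) (Fin m) F)) :
    (∀ x₁ ∈ C, ∀ x₂ ∈ C, x₁ ≠ x₂ → fanOut ρ t x₁ ∩ fanOut ρ t x₂ = ∅) ↔
      (∀ x₁ ∈ C, ∀ x₂ ∈ C, x₁ ≠ x₂ → 2 * t + ρ < (x₁ - x₂).rank) :=
  fanOut_pairwise_disjoint_iff_rank_dist_gt_general n m ρ t F C
end

section
/- Let q be a prime power, n a positive integer, 1 ≤ μ ≤ n − 1, and k = n − μ. Let H ∈ Fq^{k×n} have rank k and let B ∈ Fq^{μ×n}. Let S be uniformly distributed on Fq^k, let X be a random variable with values in Fq^n whose conditional distribution given S = s is uniform on the coset {x ∈ Fq^n : Hx = s} for each s, and set W = BX. Then I(S;W) = 0 if and only if the row space of H and the row space of B intersect trivially (⟨H⟩ ∩ ⟨B⟩ = {0}). -/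
set_option autoImplicit false

open Matrix MeasureTheory

/-- Shannon entropy (in nats) of a finitely-valued random variable. -/
noncomputable def entropy {Ω α : Type*} [Fintype α] [MeasurableSpace Ω]
    (P : Measure Ω) (X : Ω → α) : ℝ :=
  - ∑ a : α, (P {ω | X ω = a}).toReal * Real.log (P {ω | X ω = a}).toReal

/-- Mutual information (in nats) `I(X;Y) = H(X) + H(Y) - H(X,Y)`. -/
noncomputable def mutualInfo {Ω α β : Type*} [Fintype α] [Fintype β] [MeasurableSpace Ω]
    (P : Measure Ω) (X : Ω → α) (Y : Ω → β) : ℝ :=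
  entropy P X + entropy P Y - entropy P (fun ω => (X ω, Y ω))

/-! Uniformity of the message and of `X` within each coset of `ker H` makes `X` uniform on `F^n`,
since all cosets have the same size. The image of a uniform vector under a linear map `A` is
uniform on the range of `A`, so its entropy is `rank A · log q`. Reading `(HX, BX)` as the image
under the stacked matrix `[H; B]`, whose row space is `⟨H⟩ ⊔ ⟨B⟩`, the dimension formula gives
`I(S;W) = (rank H + rank B - rank [H; B]) · log q = dim (⟨H⟩ ⊓ ⟨B⟩) · log q`. -/

open scoped ENNReal
open Finset

section FiniteProbability

variable {Ω : Type*} [Fintype Ω] [MeasurableSpace Ω] [MeasurableSingletonClass Ω]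
  (P : Measure Ω)

lemma measure_comp_eq_sum {α β : Type*} [Fintype α] [DecidableEq β] (X : Ω → α) (f : α → β)
    (b : β) : P {ω | f (X ω) = b} = ∑ x with f x = b, P {ω | X ω = x} := by
  refine .trans ?_ (sum_measure_preimage_singleton (f := X) _
    fun _ _ => (Set.toFinite _).measurableSet).symm
  congr 1
  ext ω
  simp

lemma measure_comp_eq_card_mul {α β : Type*} [Fintype α] [DecidableEq β] (X : Ω → α)
    (f : α → β) (b : β) {c : ℝ≥0∞} (hX : ∀ x, f x = b → P {ω | X ω = x} = c) :
    P {ω | f (X ω) = b} = #{x | f x = b} * c := by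
  rw [measure_comp_eq_sum, sum_congr rfl fun x hx => hX x (mem_filter.1 hx).2, sum_const,
    nsmul_eq_mul]

lemma measure_eq_measure_of_comp_addMonoidHom {M V : Type*} [AddGroup M] [Fintype M]
    [AddMonoid V] {X : Ω → M} (φ : M →+ V)
    (hS : ∀ s t, P {ω | φ (X ω) = s} = P {ω | φ (X ω) = t})
    (hX : ∀ x y, φ x = φ y → P {ω | X ω = x} = P {ω | X ω = y}) (x y : M) :
    P {ω | X ω = x} = P {ω | X ω = y} := by
  classical
  have hfiber (z : M) : P {ω | φ (X ω) = φ z} = #{w | φ w = φ z} * P {ω | X ω = z} :=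
    measure_comp_eq_card_mul P X φ (φ z) fun w hw => hX w z hw
  have hcard : #{w | φ w = φ x} = #{w | φ w = φ y} :=
    AddMonoidHom.card_fiber_eq_of_mem_range φ ⟨x, rfl⟩ ⟨y, rfl⟩
  have hpos : #{w | φ w = φ x} ≠ 0 := card_ne_zero.2 ⟨x, by simp⟩
  have := hS (φ x) (φ y)
  rw [hfiber, hfiber, ← hcard] at this
  exact (ENNReal.mul_right_inj (by exact_mod_cast hpos) (ENNReal.natCast_ne_top _)).1 this

variable [IsProbabilityMeasure P]

lemma sum_measure_fiber_eq_one {α : Type*} [Fintype α] (X : Ω → α) :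
    ∑ x, P {ω | X ω = x} = 1 := by
  refine (sum_measure_preimage_singleton (f := X) _
    fun _ _ => (Set.toFinite _).measurableSet).trans ?_
  simp

section Uniform

variable {β : Type*} [Fintype β] (Y : Ω → β) {T : Finset β}

lemma measure_eq_inv_card_of_forall_eq
    (hconst : ∀ a ∈ T, ∀ b ∈ T, P {ω | Y ω = a} = P {ω | Y ω = b})
    (hzero : ∀ a ∉ T, P {ω | Y ω = a} = 0) {a : β} (ha : a ∈ T) :
    P {ω | Y ω = a} = (#T : ℝ≥0∞)⁻¹ := by
  refine ENNReal.eq_inv_of_mul_eq_one_left ?_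
  rw [← sum_measure_fiber_eq_one P Y, ← sum_subset T.subset_univ fun b _ hb => hzero b hb,
    sum_congr rfl fun b hb => hconst b hb a ha, sum_const, nsmul_eq_mul, mul_comm]

lemma entropy_eq_log_card_of_forall_eq
    (hconst : ∀ a ∈ T, ∀ b ∈ T, P {ω | Y ω = a} = P {ω | Y ω = b})
    (hzero : ∀ a ∉ T, P {ω | Y ω = a} = 0) :
    entropy P Y = Real.log #T := by
  unfold entropy
  rw [← sum_subset T.subset_univ fun a _ ha => by simp [hzero a ha],
    sum_congr rfl fun a ha => by rw [measure_eq_inv_card_of_forall_eq P Y hconst hzero ha]]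
  rcases T.eq_empty_or_nonempty with rfl | hT
  · simp
  · have : (#T : ℝ) ≠ 0 := by simpa using hT.ne_empty
    simp only [ENNReal.toReal_inv, ENNReal.toReal_natCast, Real.log_inv, mul_neg,
      sum_neg_distrib, sum_const, nsmul_eq_mul, neg_neg]
    field_simp

end Uniform

lemma entropy_comp_addMonoidHom {M V : Type*} [AddGroup M] [Fintype M] [AddMonoid V]
    [Fintype V] {X : Ω → M} (φ : M →+ V)
    (hX : ∀ x y, P {ω | X ω = x} = P {ω | X ω = y}) :
    entropy P (fun ω => φ (X ω)) = Real.log (Nat.card (Set.range φ)) := by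
  classical
  have hfiber (a : V) : P {ω | φ (X ω) = a} = #{x | φ x = a} * P {ω | X ω = 0} :=
    measure_comp_eq_card_mul P X φ a fun x _ => hX x 0
  rw [Nat.card_eq_card_toFinset]
  apply entropy_eq_log_card_of_forall_eq
  · intro a ha b hb
    rw [hfiber, hfiber, AddMonoidHom.card_fiber_eq_of_mem_range φ (by simpa using ha)
      (by simpa using hb)]
  · intro a ha
    rw [hfiber, filter_eq_empty_iff.2 fun x _ (hx : φ x = a) => ha (by simp [← hx]),
      card_empty, Nat.cast_zero, zero_mul]

end FiniteProbability

lemma entropy_comp_equiv {Ω α β : Type*} [Fintype α] [Fintype β] [MeasurableSpace Ω]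
    (P : Measure Ω) (e : α ≃ β) (Y : Ω → α) : entropy P (fun ω => e (Y ω)) = entropy P Y := by
  unfold entropy
  rw [← e.sum_comp]
  simp only [e.apply_eq_iff_eq]

section Matrix

open Module Submodule

variable {F : Type*} [Field F] {m m' n : Type*} [Fintype m] [Fintype m'] [Fintype n]

lemma rank_fromRows (A : Matrix m n F) (B : Matrix m' n F) :
    (fromRows A B).rank = finrank F ↥(span F (Set.range A.row) ⊔ span F (Set.range B.row)) := by
  rw [rank_eq_finrank_span_row, ← span_union]
  exact congr_arg (fun s => finrank F (span F s)) (Set.Sum.elim_range A.row B.row)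

variable [Fintype F] [DecidableEq m] [DecidableEq m'] {Ω : Type*} [MeasurableSpace Ω]
  (P : Measure Ω) {X : Ω → n → F}

lemma entropy_mulVec_prod (A : Matrix m n F) (B : Matrix m' n F) :
    entropy P (fun ω => (A *ᵥ X ω, B *ᵥ X ω)) = entropy P (fun ω => fromRows A B *ᵥ X ω) := by
  rw [← entropy_comp_equiv P (Equiv.sumArrowEquivProdArrow m m' F)]
  simp only [fromRows_mulVec]
  rfl

variable [Fintype Ω] [MeasurableSingletonClass Ω] [IsProbabilityMeasure P] [DecidableEq n]

lemma entropy_mulVec (hX : ∀ x y, P {ω | X ω = x} = P {ω | X ω = y}) (A : Matrix m n F) :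
    entropy P (fun ω => A *ᵥ X ω) = A.rank * Real.log (Fintype.card F) := by
  refine (entropy_comp_addMonoidHom P A.mulVecLin.toAddMonoidHom hX).trans ?_
  have hrange : Set.range A.mulVecLin.toAddMonoidHom = LinearMap.range A.mulVecLin :=
    (LinearMap.coe_range _).symm
  rw [hrange, SetLike.coe_sort_coe, natCard_eq_pow_finrank (K := F), Nat.card_eq_fintype_card,
    Nat.cast_pow, Real.log_pow, Matrix.rank]

lemma mutualInfo_mulVec (hX : ∀ x y, P {ω | X ω = x} = P {ω | X ω = y}) (A : Matrix m n F)
    (B : Matrix m' n F) :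
    mutualInfo P (fun ω => A *ᵥ X ω) (fun ω => B *ᵥ X ω) =
      finrank F ↥(span F (Set.range A.row) ⊓ span F (Set.range B.row)) *
        Real.log (Fintype.card F) := by
  have hdim : ((fromRows A B).rank : ℝ) +
      finrank F ↥(span F (Set.range A.row) ⊓ span F (Set.range B.row)) = A.rank + B.rank := by
    rw [rank_fromRows, A.rank_eq_finrank_span_row, B.rank_eq_finrank_span_row]
    exact_mod_cast finrank_sup_add_finrank_inf_eq _ _
  unfold mutualInfo
  rw [entropy_mulVec_prod, entropy_mulVec P hX, entropy_mulVec P hX, entropy_mulVec P hX]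
  linear_combination (-Real.log (Fintype.card F)) * hdim

end Matrix

theorem cosetCoding_secure_iff_rowSpace_inter_trivial_general
    (n μ : ℕ)
    (F : Type) [Field F] [Fintype F]
    (H : Matrix (Fin (n - μ)) (Fin n) F)
    (B : Matrix (Fin μ) (Fin n) F)
    (Ω : Type) [Fintype Ω] [MeasurableSpace Ω] [MeasurableSingletonClass Ω]
    (P : Measure Ω) [IsProbabilityMeasure P]
    (X : Ω → Fin n → F)
    (hSunif : ∀ s₁ s₂ : Fin (n - μ) → F,
      P {ω | H *ᵥ X ω = s₁} = P {ω | H *ᵥ X ω = s₂})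
    (hXunif : ∀ x₁ x₂ : Fin n → F, H *ᵥ x₁ = H *ᵥ x₂ →
      P {ω | X ω = x₁} = P {ω | X ω = x₂}) :
    mutualInfo P (fun ω => H *ᵥ X ω) (fun ω => B *ᵥ X ω) = 0 ↔
      Submodule.span F (Set.range fun i => H i) ⊓
        Submodule.span F (Set.range fun i => B i) = ⊥ := by
  have hX := measure_eq_measure_of_comp_addMonoidHom P H.mulVecLin.toAddMonoidHom hSunif hXunif
  have hlog : Real.log (Fintype.card F) ≠ 0 :=
    (Real.log_pos (by exact_mod_cast Fintype.one_lt_card)).ne'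
  rw [mutualInfo_mulVec P hX H B, mul_eq_zero, or_iff_left hlog, Nat.cast_eq_zero,
    Submodule.finrank_eq_zero]
  rfl

/-- Ozarow–Wyner coset coding: with `k = n - μ`, `H ∈ F^{k×n}` of full rank `k`, a message
`S = HX` uniform on `F^k`, and `X` conditionally uniform on the coset `{x : Hx = s}` given
`S = s`, the eavesdropper observation `W = BX` reveals nothing (`I(S;W) = 0`) if and only if
the row spaces of `H` and `B` intersect trivially. -/
theorem cosetCoding_secure_iff_rowSpace_inter_trivial
    (q : ℕ) (hq : IsPrimePow q) (n μ : ℕ) (hμ1 : 1 ≤ μ) (hμn : μ ≤ n - 1)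
    (F : Type) [Field F] [Fintype F] (hF : Fintype.card F = q)
    (H : Matrix (Fin (n - μ)) (Fin n) F) (hH : H.rank = n - μ)
    (B : Matrix (Fin μ) (Fin n) F)
    (Ω : Type) [Fintype Ω] [MeasurableSpace Ω] [MeasurableSingletonClass Ω]
    (P : Measure Ω) [IsProbabilityMeasure P]
    (X : Ω → Fin n → F)
    (hSunif : ∀ s₁ s₂ : Fin (n - μ) → F,
      P {ω | H *ᵥ X ω = s₁} = P {ω | H *ᵥ X ω = s₂})
    (hXunif : ∀ x₁ x₂ : Fin n → F, H *ᵥ x₁ = H *ᵥ x₂ →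
      P {ω | X ω = x₁} = P {ω | X ω = x₂}) :
    mutualInfo P (fun ω => H *ᵥ X ω) (fun ω => B *ᵥ X ω) = 0 ↔
      Submodule.span F (Set.range fun i => H i) ⊓
        Submodule.span F (Set.range fun i => B i) = ⊥ :=
  cosetCoding_secure_iff_rowSpace_inter_trivial_general n μ F H B Ω P X hSunif hXunif
end

section
/- Let q be a prime power and L a field extension of Fq of degree m. Let 1 ≤ k < n, let H ∈ L^{k×n} have rank k, and let C = {x ∈ L^n : Hx = 0} (an [n, n−k] linear code over L with parity-check matrix H). If the minimum rank distance of C equals k + 1, then for every integer 0 ≤ μ ≤ n − k and every matrix B ∈ Fq^{μ×n} (viewed in L^{μ×n} via the embedding Fq ⊆ L), the rank over L of the stacked (k+μ)×n matrix [H; B] equals rank H + rank B, where rank B is the rank of B over Fq (which equals its rank over L). -/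
set_option autoImplicit false

open Matrix

/-- The rank weight of `x ∈ L^n`: the dimension over `F` of the `F`-span of its coordinates. -/
noncomputable def rankWeight (F : Type*) {L : Type*} [Field F] [Field L] [Algebra F L]
    {n : ℕ} (x : Fin n → L) : ℕ :=
  Module.finrank F (Submodule.span F (Set.range x))

/-- The minimum rank distance of a code `C ⊆ L^n` equals `d`. -/
def minRankDistEq (F : Type*) {L : Type*} [Field F] [Field L] [Algebra F L]
    {n : ℕ} (C : Set (Fin n → L)) (d : ℕ) : Prop :=
  IsLeast {e | ∃ x ∈ C, ∃ y ∈ C, x ≠ y ∧ rankWeight F (x - y) = e} d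

/-! The kernel of `[H; B]` is `C ⊓ K` with `C = ker H` and `K = ker B` over `L`.
As `rank B ≤ n - k`, the kernel of `B` over `F` contains `k` independent vectors; their `L`-span
`W` lies in `K`, has dimension `k`, and meets `C` trivially since its vectors have rank weight at
most `k < k + 1`. So `W` is a complement of `C`, the modular law gives `K = (C ⊓ K) ⊕ W`, and
`dim (C ⊓ K) = dim K - k = n - rank B - k`. Extension of scalars preserves `rank B` because it
preserves linear independence of `F`-rational vectors. -/

theorem Submodule.finrank_inf_add_finrank_of_isCompl {K V : Type*} [DivisionRing K]
    [AddCommGroup V] [Module K V] [FiniteDimensional K V] {C W U : Submodule K V}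
    (hCW : IsCompl C W) (hWU : W ≤ U) :
    Module.finrank K ↥(C ⊓ U) + Module.finrank K W = Module.finrank K U := by
  have hsup : C ⊓ U ⊔ W = U := by
    rw [sup_comm, ← sup_inf_assoc_of_le C hWU, sup_comm, hCW.sup_eq_top, top_inf_eq]
  have hinf : C ⊓ U ⊓ W = ⊥ :=
    eq_bot_iff.mpr <| (inf_le_inf_right W inf_le_left).trans hCW.inf_eq_bot.le
  rw [← Submodule.finrank_sup_add_finrank_inf_eq, hsup, hinf, finrank_bot, add_zero]

theorem finrank_le_finrank_of_algebraMap_comp_mem {ι F L : Type*} [Finite ι] [Field F] [Field L]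
    [Algebra F L] {V : Submodule F (ι → F)} {W : Submodule L (ι → L)}
    (h : ∀ v ∈ V, algebraMap F L ∘ v ∈ W) : Module.finrank F V ≤ Module.finrank L W := by
  let b := Module.finBasis F V
  let v := V.subtype ∘ b
  have hv : LinearIndependent F v := b.linearIndependent.map' _ V.ker_subtype
  have hspan : Submodule.span L (Set.range fun i => algebraMap F L ∘ v i) ≤ W := by
    rw [Submodule.span_le]
    rintro _ ⟨i, rfl⟩
    exact h _ (b i).2
  calc Module.finrank F V
      = Module.finrank L (Submodule.span L (Set.range fun i => algebraMap F L ∘ v i)) := by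
        rw [finrank_span_eq_card (linearIndependent_algebraMap_comp_iff.mpr hv), Fintype.card_fin]
    _ ≤ Module.finrank L W := Submodule.finrank_mono hspan

namespace Matrix

variable {m n F L : Type*} [Field F] [Field L] [Algebra F L]

theorem mulVec_map_algebraMap [Fintype n] (B : Matrix m n F) (y : n → F) :
    B.map (algebraMap F L) *ᵥ (algebraMap F L ∘ y) = algebraMap F L ∘ (B *ᵥ y) :=
  funext fun i => (RingHom.map_mulVec _ B y i).symm

theorem rank_add_finrank_ker_mulVecLin {K : Type*} [Field K] [Fintype n] (A : Matrix m n K) :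
    A.rank + Module.finrank K (LinearMap.ker A.mulVecLin) = Fintype.card n := by
  rw [← Module.finrank_fintype_fun_eq_card K]
  exact LinearMap.finrank_range_add_finrank_ker A.mulVecLin

theorem rank_map_algebraMap [Finite m] [Fintype n] (B : Matrix m n F) :
    (B.map (algebraMap F L)).rank = B.rank := by
  have hrange : B.rank ≤ (B.map (algebraMap F L)).rank :=
    finrank_le_finrank_of_algebraMap_comp_mem fun _ ⟨y, hy⟩ =>
      ⟨algebraMap F L ∘ y, (mulVec_map_algebraMap B y).trans (congrArg _ hy)⟩
  have hker : Module.finrank F (LinearMap.ker B.mulVecLin) ≤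
      Module.finrank L (LinearMap.ker (B.map (algebraMap F L)).mulVecLin) :=
    finrank_le_finrank_of_algebraMap_comp_mem fun y (hy : B *ᵥ y = 0) => by
      simp [mulVec_map_algebraMap, hy]
  have := rank_add_finrank_ker_mulVecLin B
  have := rank_add_finrank_ker_mulVecLin (B.map (algebraMap F L))
  omega

theorem ker_mulVecLin_fromRows {m' R : Type*} [CommRing R] [Fintype n] (A : Matrix m n R)
    (A' : Matrix m' n R) :
    LinearMap.ker (fromRows A A').mulVecLin =
      LinearMap.ker A.mulVecLin ⊓ LinearMap.ker A'.mulVecLin := by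
  ext x
  simp [fromRows_mulVec, ← Sum.elim_zero_zero, Sum.elim_eq_iff]

end Matrix

section RankMetric

variable {F L : Type*} [Field F] [Field L] [Algebra F L] {n : ℕ}

theorem rankWeight_le_card_of_mem_span {ι : Type*} [Fintype ι] {w : ι → Fin n → F}
    {x : Fin n → L} (hx : x ∈ Submodule.span L (Set.range fun i => algebraMap F L ∘ w i)) :
    rankWeight F x ≤ Fintype.card ι := by
  obtain ⟨c, rfl⟩ := (Submodule.mem_span_range_iff_exists_fun L).mp hx
  have hcoord : Submodule.span F (Set.range (∑ i, c i • (algebraMap F L ∘ w i))) ≤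
      Submodule.span F (Set.range c) := by
    rw [Submodule.span_le]
    rintro _ ⟨j, rfl⟩
    have : (∑ i, c i • (algebraMap F L ∘ w i)) j = ∑ i, w i j • c i := by
      simp [Algebra.smul_def, mul_comm]
    rw [this]
    exact Submodule.sum_mem _ fun i _ => Submodule.smul_mem _ _ (Submodule.subset_span ⟨i, rfl⟩)
  have := FiniteDimensional.span_of_finite F (Set.finite_range c)
  exact (Submodule.finrank_mono hcoord).trans (finrank_range_le_card c)

theorem eq_zero_of_rankWeight_lt {C : Set (Fin n → L)} {d : ℕ} (hC : minRankDistEq F C d)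
    (h0 : 0 ∈ C) {x : Fin n → L} (hx : x ∈ C) (hlt : rankWeight F x < d) : x = 0 := by
  by_contra hne
  exact hlt.not_ge (hC.2 ⟨x, hx, 0, h0, hne, by rw [sub_zero]⟩)

end RankMetric

theorem exists_isCompl_ker_le_ker_map_algebraMap {F L : Type*} [Field F] [Field L] [Algebra F L]
    {m m' : Type*} {n k : ℕ} (H : Matrix m (Fin n) L) (hH : H.rank = k)
    (hMRD : minRankDistEq F {x | H *ᵥ x = 0} (k + 1)) (B : Matrix m' (Fin n) F)
    (hB : k + B.rank ≤ n) :
    ∃ W : Submodule L (Fin n → L), IsCompl (LinearMap.ker H.mulVecLin) W ∧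
      W ≤ LinearMap.ker (B.map (algebraMap F L)).mulVecLin := by
  have hkerB := B.rank_add_finrank_ker_mulVecLin
  have hkerH := H.rank_add_finrank_ker_mulVecLin
  rw [Fintype.card_fin] at hkerB hkerH
  obtain ⟨w, hw⟩ := exists_linearIndependent_of_le_finrank (R := F)
    (M := LinearMap.ker B.mulVecLin) (n := k) (by omega)
  let v := (LinearMap.ker B.mulVecLin).subtype ∘ w
  have hv : LinearIndependent F v := hw.map' _ (Submodule.ker_subtype _)
  refine ⟨Submodule.span L (Set.range fun i => algebraMap F L ∘ v i),
    (Submodule.isCompl_iff_disjoint _ _ ?_).mpr ?_, ?_⟩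
  · rw [finrank_span_eq_card (linearIndependent_algebraMap_comp_iff.mpr hv),
      Module.finrank_fin_fun, Fintype.card_fin]
    omega
  · rw [Submodule.disjoint_def]
    intro x hxH hxW
    refine eq_zero_of_rankWeight_lt hMRD (mulVec_zero H) hxH ?_
    exact (rankWeight_le_card_of_mem_span hxW).trans_lt (by simp)
  · rw [Submodule.span_le]
    rintro _ ⟨i, rfl⟩
    have hwi : B *ᵥ v i = 0 := (w i).2
    simp [mulVec_map_algebraMap, hwi]

theorem rank_fromRows_eq_add_of_MRD_general
    (F L : Type) [Field F] [Field L] [Algebra F L]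
    (n k : ℕ)
    (H : Matrix (Fin k) (Fin n) L) (hH : H.rank = k)
    (hMRD : minRankDistEq F {x : Fin n → L | H *ᵥ x = 0} (k + 1))
    (μ : ℕ) (hμ : μ ≤ n - k) (B : Matrix (Fin μ) (Fin n) F) :
    (Matrix.fromRows H (B.map (algebraMap F L))).rank = H.rank + B.rank := by
  obtain ⟨W, hCW, hWK⟩ := exists_isCompl_ker_le_ker_map_algebraMap H hH hMRD B
    (by have := B.rank_le_height; have := H.rank_le_width; omega)
  have hdim := Submodule.finrank_inf_add_finrank_of_isCompl hCW hWK
  have hstack := (fromRows H (B.map (algebraMap F L))).rank_add_finrank_ker_mulVecLin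
  have hK := (B.map (algebraMap F L)).rank_add_finrank_ker_mulVecLin
  have hC := H.rank_add_finrank_ker_mulVecLin
  have hW := Submodule.finrank_add_eq_of_isCompl hCW
  rw [ker_mulVecLin_fromRows, Fintype.card_fin] at hstack
  rw [rank_map_algebraMap, Fintype.card_fin] at hK
  rw [Fintype.card_fin] at hC
  rw [Module.finrank_fin_fun] at hW
  omega

/-- If the `[n, n-k]` code `C = {x : Hx = 0}` over `L` has minimum rank distance `k + 1`
(i.e., is MRD), then for every `μ ≤ n - k` and every `B ∈ F^{μ×n}`, the stacked matrix
`[H; B]` satisfies `rank [H; B] = rank H + rank B`. -/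
theorem rank_fromRows_eq_add_of_MRD
    (q m : ℕ) (hq : IsPrimePow q)
    (F L : Type) [Field F] [Fintype F] (hF : Fintype.card F = q)
    [Field L] [Algebra F L] (hm : Module.finrank F L = m)
    (n k : ℕ) (hk : 1 ≤ k) (hkn : k < n)
    (H : Matrix (Fin k) (Fin n) L) (hH : H.rank = k)
    (hMRD : minRankDistEq F {x : Fin n → L | H *ᵥ x = 0} (k + 1))
    (μ : ℕ) (hμ : μ ≤ n - k) (B : Matrix (Fin μ) (Fin n) F) :
    (Matrix.fromRows H (B.map (algebraMap F L))).rank = H.rank + B.rank :=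
  rank_fromRows_eq_add_of_MRD_general F L n k H hH hMRD μ hμ B
end

section
/- Let q be a prime power, L a field extension of Fq of degree m, and let H ∈ L^{k×n} and B ∈ L^{μ×n}. Let X be a random variable with values in L^n, and set S = HX and W = BX. If for every s with P(S = s) > 0 the conditional distribution of X given S = s is uniform on the coset {x ∈ L^n : Hx = s}, then I(S;W) ≤ (rank H + rank B − rank [H; B]) · m · log q, where [H; B] is the stacked (k+μ)×n matrix and ranks are over L. -/
/-!
Write `p(x) = P(X = x)`. Since `p` is constant on the cosets of `ker H`, and the fibres of
`x ↦ Hx` and of `x ↦ (Hx, Bx)` are cosets of `ker H` and of `ker [H; B]`, grouping the outcomes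
of `X` by fibre gives `H(HX) = H(X) - log |ker H|` and `H(HX, BX) = H(X) - log |ker [H; B]|`.
Hence `I(S;W) = H(W) - log |ker H| + log |ker [H; B]|`, and `H(W) ≤ log |range B|`; rank-nullity
and `|L| = q ^ m` turn these cardinalities into the stated ranks.
-/

set_option autoImplicit false

open Matrix MeasureTheory

open Finset Real

theorem negMulLog_sum_of_forall_eq {ι : Type*} {s : Finset ι} {p : ι → ℝ} {c : ℝ}
    (hp : ∀ i ∈ s, p i = c) :
    negMulLog (∑ i ∈ s, p i) = ∑ i ∈ s, (negMulLog (p i) - p i * log #s) := by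
  have hterm : ∀ i ∈ s, negMulLog (p i) - p i * log #s = negMulLog c - c * log #s :=
    fun i hi => by rw [hp i hi]
  rw [sum_congr rfl hp, sum_congr rfl hterm, sum_const, sum_const, nsmul_eq_mul, nsmul_eq_mul,
    negMulLog_mul, negMulLog]
  ring

theorem sum_negMulLog_le_log_card {ι : Type*} {s : Finset ι} {p : ι → ℝ}
    (hp₀ : ∀ i ∈ s, 0 ≤ p i) (hp₁ : ∑ i ∈ s, p i = 1) :
    ∑ i ∈ s, negMulLog (p i) ≤ log #s := by
  have hs : (0 : ℝ) < #s := by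
    obtain ⟨i, hi⟩ := nonempty_of_sum_ne_zero (hp₁.trans_ne one_ne_zero)
    exact_mod_cast card_pos.2 ⟨i, hi⟩
  have jensen := concaveOn_negMulLog.le_map_sum (t := s) (w := fun _ => (#s : ℝ)⁻¹) (p := p)
    (fun _ _ => by positivity) (by simp [hs.ne']) hp₀
  simp only [smul_eq_mul, ← mul_sum, hp₁, mul_one] at jensen
  rw [negMulLog, log_inv] at jensen
  calc ∑ i ∈ s, negMulLog (p i) = #s * ((#s : ℝ)⁻¹ * ∑ i ∈ s, negMulLog (p i)) := by
        field_simp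
    _ ≤ #s * (-(#s : ℝ)⁻¹ * -log #s) := by gcongr
    _ = log #s := by field_simp

section

variable {Ω α β : Type*} [MeasurableSpace Ω] [Fintype α] (P : Measure Ω)

theorem entropy_eq_sum_negMulLog (X : Ω → α) :
    entropy P X = ∑ a, negMulLog (P.real (X ⁻¹' {a})) := by
  simp only [entropy, negMulLog, measureReal_def, neg_mul, sum_neg_distrib]
  rfl

variable [DiscreteMeasurableSpace Ω]

theorem measureReal_comp_preimage_singleton [IsFiniteMeasure P] [DecidableEq β]
    (X : Ω → α) (f : α → β) (b : β) :
    P.real ((f ∘ X) ⁻¹' {b}) = ∑ a with f a = b, P.real (X ⁻¹' {a}) := by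
  rw [sum_measureReal_preimage_singleton _ fun _ _ => .of_discrete]
  congr 1
  ext ω
  simp

variable [IsProbabilityMeasure P]

theorem sum_measureReal_preimage_singleton_eq_one (X : Ω → α) :
    ∑ a, P.real (X ⁻¹' {a}) = 1 := by
  rw [sum_measureReal_preimage_singleton _ fun _ _ => .of_discrete]
  simp

variable [Fintype β]

theorem entropy_comp_eq_sub_log [DecidableEq β] (X : Ω → α) (f : α → β) {N : ℕ}
    (hconst : ∀ x y, f x = f y → P {ω | X ω = x} = P {ω | X ω = y})
    (hcard : ∀ x, #{y | f y = f x} = N) :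
    entropy P (fun ω => f (X ω)) = entropy P X - log N := by
  set p : α → ℝ := fun x => P.real (X ⁻¹' {x})
  have hfiber : ∀ b, negMulLog (P.real ((f ∘ X) ⁻¹' {b})) =
      ∑ x with f x = b, (negMulLog (p x) - p x * log N) := by
    intro b
    rw [measureReal_comp_preimage_singleton]
    rcases (univ.filter fun x => f x = b).eq_empty_or_nonempty with hempty | ⟨x₀, hx₀⟩
    · simp [hempty]
    have hx₀b : f x₀ = b := (mem_filter.1 hx₀).2
    have hp : ∀ x ∈ univ.filter (f · = b), p x = p x₀ := fun x hx =>
      congrArg ENNReal.toReal (hconst x x₀ ((mem_filter.1 hx).2.trans hx₀b.symm))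
    rw [negMulLog_sum_of_forall_eq hp, ← hx₀b, hcard]
  calc entropy P (fun ω => f (X ω))
      = ∑ b, ∑ x with f x = b, (negMulLog (p x) - p x * log N) := by
        rw [entropy_eq_sum_negMulLog]; exact sum_congr rfl fun b _ => hfiber b
    _ = ∑ x, negMulLog (p x) - (∑ x, p x) * log N := by
        rw [sum_fiberwise, sum_sub_distrib, sum_mul]
    _ = entropy P X - log N := by
        rw [entropy_eq_sum_negMulLog, sum_measureReal_preimage_singleton_eq_one, one_mul]

theorem entropy_le_log_card (Y : Ω → β) (T : Finset β) (hT : ∀ ω, Y ω ∈ T) :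
    entropy P Y ≤ log #T := by
  have hout : ∀ b ∉ T, P.real (Y ⁻¹' {b}) = 0 := fun b hb => by
    rw [Set.preimage_singleton_eq_empty.2 fun ⟨ω, hω⟩ => hb (hω ▸ hT ω), measureReal_empty]
  rw [entropy_eq_sum_negMulLog, ← sum_subset (subset_univ T) fun b _ hb => by simp [hout b hb]]
  refine sum_negMulLog_le_log_card (fun _ _ => measureReal_nonneg) ?_
  rw [← sum_measureReal_preimage_singleton_eq_one P Y]
  exact sum_subset (subset_univ T) fun b _ hb => hout b hb

end

theorem Matrix.card_filter_mulVec_eq {K m n : Type*} [Field K] [Fintype K] [Fintype n]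
    [DecidableEq n] [DecidableEq (m → K)] (M : Matrix m n K) (x : n → K) :
    #{y | M *ᵥ y = M *ᵥ x} = Fintype.card K ^ (Fintype.card n - M.rank) := by
  classical
  have hfiber : #{y | M *ᵥ y = M *ᵥ x} = #{y | M.mulVecLin y = 0} :=
    AddMonoidHom.card_fiber_eq_of_mem_range M.mulVecLin ⟨x, rfl⟩ ⟨0, map_zero _⟩
  have hnullity := M.mulVecLin.finrank_range_add_finrank_ker
  rw [Module.finrank_fintype_fun_eq_card] at hnullity
  rw [hfiber, ← Fintype.card_subtype, ← Nat.card_eq_fintype_card]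
  change Nat.card (LinearMap.ker M.mulVecLin) = _
  rw [Nat.card_eq_fintype_card, Module.card_eq_pow_finrank (K := K), rank]
  congr 1
  omega

theorem mutualInfo_le_of_cosetUniform_general
    (q m : ℕ)
    (F L : Type) [Field F] [Fintype F] (hF : Fintype.card F = q)
    [Field L] [Fintype L] [Algebra F L] (hm : Module.finrank F L = m)
    (n k μ : ℕ)
    (H : Matrix (Fin k) (Fin n) L) (B : Matrix (Fin μ) (Fin n) L)
    (Ω : Type) [Fintype Ω] [MeasurableSpace Ω] [MeasurableSingletonClass Ω]
    (P : Measure Ω) [IsProbabilityMeasure P]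
    (X : Ω → Fin n → L)
    (hXunif : ∀ x₁ x₂ : Fin n → L, H *ᵥ x₁ = H *ᵥ x₂ →
      P {ω | X ω = x₁} = P {ω | X ω = x₂}) :
    mutualInfo P (fun ω => H *ᵥ X ω) (fun ω => B *ᵥ X ω) ≤
      ((H.rank : ℝ) + (B.rank : ℝ) - ((Matrix.fromRows H B).rank : ℝ)) *
        (m * Real.log q) := by
  classical
  have hS := entropy_comp_eq_sub_log P X (H *ᵥ ·) hXunif H.card_filter_mulVec_eq
  have hSW := entropy_comp_eq_sub_log P X (fun x => (H *ᵥ x, B *ᵥ x))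
    (fun x y h => hXunif x y congr(($h).1)) fun x => by
      simpa only [Prod.mk.injEq, fromRows_mulVec, Sum.elim_eq_iff] using
        (fromRows H B).card_filter_mulVec_eq x
  have hW : entropy P (B *ᵥ X ·) ≤ B.rank * Real.log (Fintype.card L) := by
    refine (entropy_le_log_card P _ (LinearMap.range B.mulVecLin : Set _).toFinset
      fun ω => by simp).trans_eq ?_
    rw [Set.toFinset_card, ← Nat.card_eq_fintype_card, SetLike.coe_sort_coe,
      Nat.card_eq_fintype_card, Module.card_eq_pow_finrank (K := L),
      Nat.cast_pow, Real.log_pow, rank]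
  have hL : Real.log (Fintype.card L) = m * Real.log q := by
    rw [Module.card_eq_pow_finrank (K := F), hF, hm, Nat.cast_pow, Real.log_pow]
  rw [mutualInfo, hS, hSW, Nat.cast_pow, Nat.cast_pow, Real.log_pow, Real.log_pow,
    Nat.cast_sub H.rank_le_card_width, Nat.cast_sub (fromRows H B).rank_le_card_width, ← hL]
  linarith

/-- If `X` is conditionally uniform on each coset `{x : Hx = s}` of the code with
parity-check matrix `H`, then with `S = HX` and `W = BX`,
`I(S;W) ≤ (rank H + rank B - rank [H; B]) · m · log q`. -/
theorem mutualInfo_le_of_cosetUniform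
    (q m : ℕ) (hq : IsPrimePow q)
    (F L : Type) [Field F] [Fintype F] (hF : Fintype.card F = q)
    [Field L] [Fintype L] [Algebra F L] (hm : Module.finrank F L = m)
    (n k μ : ℕ)
    (H : Matrix (Fin k) (Fin n) L) (B : Matrix (Fin μ) (Fin n) L)
    (Ω : Type) [Fintype Ω] [MeasurableSpace Ω] [MeasurableSingletonClass Ω]
    (P : Measure Ω) [IsProbabilityMeasure P]
    (X : Ω → Fin n → L)
    (hXunif : ∀ x₁ x₂ : Fin n → L, H *ᵥ x₁ = H *ᵥ x₂ →
      P {ω | X ω = x₁} = P {ω | X ω = x₂}) :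
    mutualInfo P (fun ω => H *ᵥ X ω) (fun ω => B *ᵥ X ω) ≤
      ((H.rank : ℝ) + (B.rank : ℝ) - ((Matrix.fromRows H B).rank : ℝ)) *
        (m * Real.log q) :=
  mutualInfo_le_of_cosetUniform_general q m F L hF hm n k μ H B Ω P X hXunif
end

section
/- Let q be a prime power and L a field extension of Fq of degree m with m ≥ n. Let 1 ≤ k < n, let H ∈ L^{k×n} have rank k, and suppose the code C = {x ∈ L^n : Hx = 0} has minimum rank distance k + 1 (i.e., C is MRD). Let μ be an integer with 0 ≤ μ ≤ n − k. Let S be any random variable with values in L^k, and let X be a random variable with values in L^n whose conditional distribution given S = s is uniform on the coset {x ∈ L^n : Hx = s} for each s. Then for every matrix B ∈ Fq^{μ×n} (acting on L^n via the embedding Fq ⊆ L), I(S; BX) = 0. -/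
set_option autoImplicit false
set_option linter.unusedSectionVars false
set_option maxHeartbeats 1000000

open Matrix MeasureTheory

section Auxiliary

/-- Coordinatewise algebra map `F^n → L^n`. -/
noncomputable def iotaV {n : ℕ} (F L : Type) [Field F] [Field L] [Algebra F L]
    (v : Fin n → F) : Fin n → L := fun i => algebraMap F L (v i)

variable {F L : Type} [Field F] [Fintype F] [Field L] [Fintype L] [Algebra F L]
variable {n k μ : ℕ}

lemma iota_mulVec {a b : ℕ} (M : Matrix (Fin a) (Fin b) F) (x : Fin b → F) :
    iotaV F L (M *ᵥ x) = (M.map (algebraMap F L)) *ᵥ (iotaV F L x) := by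
  funext i
  simp [iotaV, Matrix.mulVec, dotProduct, map_sum]

lemma iota_lin_indep {t : ℕ} (b : Fin t → (Fin n → F)) (hb : LinearIndependent F b) :
    LinearIndependent L (fun j => iotaV F L (b j)) := by
  classical
  let T : (Fin t → F) →ₗ[F] (Fin n → F) := (Matrix.of fun i j => b j i).mulVecLin
  have hT : ∀ c : Fin t → F, T c = ∑ j, c j • b j := by
    intro c; funext i
    simp [T, Matrix.mulVecLin_apply, Matrix.mulVec, dotProduct, mul_comm,
      Finset.sum_apply]
  have hTinj : LinearMap.ker T = ⊥ := by
    rw [LinearMap.ker_eq_bot']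
    intro c hc
    rw [hT] at hc
    exact funext fun j => linearIndependent_iff'.1 hb Finset.univ c (by simpa using hc) j
      (Finset.mem_univ j)
  obtain ⟨g, hg⟩ := T.exists_leftInverse_of_injective hTinj
  set A : Matrix (Fin t) (Fin n) F := LinearMap.toMatrix' g with hA
  have hAb : ∀ j, A *ᵥ b j = Pi.single j 1 := by
    intro j
    have h1 : T (Pi.single j 1) = b j := by
      rw [hT]
      simp [Pi.single_apply, Finset.sum_ite_eq']
    have h2 : g (b j) = Pi.single j 1 := by
      rw [← h1]
      exact congrArg (fun f => f (Pi.single j 1)) (congrArg DFunLike.coe hg)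
    calc A *ᵥ b j = Matrix.toLin' A (b j) := (Matrix.toLin'_apply _ _).symm
      _ = g (b j) := by rw [hA, Matrix.toLin'_toMatrix']
      _ = _ := h2
  rw [Fintype.linearIndependent_iff]
  intro c hc j
  set A' := (A.map (algebraMap F L)).mulVecLin with hA'
  have h3 : A' (∑ i, c i • iotaV F L (b i)) = 0 := by rw [hc]; simp
  rw [map_sum] at h3
  simp only [_root_.map_smul] at h3
  have h4 : ∀ i, A' (iotaV F L (b i)) = Pi.single i (1:L) := by
    intro i
    have : A' (iotaV F L (b i)) = iotaV F L (A *ᵥ b i) := (iota_mulVec A (b i)).symm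
    rw [this, hAb]
    funext l
    by_cases h : l = i
    · subst h; simp [iotaV]
    · simp [iotaV, Pi.single_eq_of_ne h, Pi.single_eq_of_ne h]
  simp only [h4] at h3
  have := congrFun h3 j
  simpa [Pi.single_apply, Finset.sum_ite_eq'] using this

lemma crux_exists (hkn : k < n)
    (H : Matrix (Fin k) (Fin n) L) (hH : H.rank = k)
    (hcode : ∀ c : Fin n → L, H *ᵥ c = 0 → c ≠ 0 → k + 1 ≤ rankWeight F c)
    (B : Matrix (Fin μ) (Fin n) F) (hμ : μ ≤ n - k) :
    ∀ s : Fin k → L, ∃ z, (B.map (algebraMap F L)) *ᵥ z = 0 ∧ H *ᵥ z = s := by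
  classical
  have hHsurj : ∀ s : Fin k → L, ∃ x, H *ᵥ x = s := by
    have hrange : LinearMap.range H.mulVecLin = ⊤ := by
      apply Submodule.eq_top_of_finrank_eq
      rw [← Matrix.rank, hH, Module.finrank_pi]
      simp
    intro s
    obtain ⟨x, hx⟩ := LinearMap.range_eq_top.1 hrange s
    exact ⟨x, hx⟩
  set WF : Submodule F (Fin n → F) := LinearMap.ker B.mulVecLin with hWF
  set t : ℕ := Module.finrank F WF with ht
  have hkt : k ≤ t := by
    have h1 : B.rank + t = n := by
      have := LinearMap.finrank_range_add_finrank_ker B.mulVecLin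
      rw [Module.finrank_pi] at this
      simpa [Matrix.rank, ht, hWF] using this
    have h2 : B.rank ≤ μ := by
      simpa using B.rank_le_card_height
    omega
  set bW : Fin t → (Fin n → F) := fun j => ((Module.finBasis F WF) j : Fin n → F) with hbW
  have hbWind : LinearIndependent F bW :=
    (Module.finBasis F WF).linearIndependent.map' WF.subtype WF.ker_subtype
  have hbWker : ∀ j, B *ᵥ bW j = 0 := fun j => ((Module.finBasis F WF) j).2
  set v : Fin t → (Fin n → L) := fun j => iotaV F L (bW j) with hv
  have hvind : LinearIndependent L v := iota_lin_indep bW hbWind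
  set WL : Submodule L (Fin n → L) := Submodule.span L (Set.range v) with hWL
  set B' : Matrix (Fin μ) (Fin n) L := B.map (algebraMap F L) with hB'
  have hWLker : WL ≤ LinearMap.ker B'.mulVecLin := by
    rw [hWL, Submodule.span_le]
    rintro _ ⟨j, rfl⟩
    simp only [SetLike.mem_coe, LinearMap.mem_ker, Matrix.mulVecLin_apply]
    rw [hv, ← iota_mulVec, hbWker]
    funext i; simp [iotaV]
  have hfinWL : Module.finrank L WL = t := by
    rw [hWL, finrank_span_eq_card hvind, Fintype.card_fin]
  set C : Submodule L (Fin n → L) := LinearMap.ker H.mulVecLin with hC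
  have hfinC : Module.finrank L C = n - k := by
    have := LinearMap.finrank_range_add_finrank_ker H.mulVecLin
    rw [Module.finrank_pi] at this
    have hr : Module.finrank L (LinearMap.range H.mulVecLin) = k := hH
    simp only [Fintype.card_fin] at this
    rw [hC]
    omega
  set u : Fin k → (Fin n → L) := fun j => v (Fin.castLE hkt j) with hu
  have huind : LinearIndependent L u := hvind.comp _ (Fin.castLE_injective hkt)
  set UL : Submodule L (Fin n → L) := Submodule.span L (Set.range u) with hUL
  have hULWL : UL ≤ WL := by
    rw [hUL, hWL, Submodule.span_le]
    rintro _ ⟨j, rfl⟩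
    exact Submodule.subset_span ⟨Fin.castLE hkt j, rfl⟩
  have hfinUL : Module.finrank L UL = k := by
    rw [hUL, finrank_span_eq_card huind, Fintype.card_fin]
  have hrw : ∀ x : Fin n → L, x ∈ UL → rankWeight F x ≤ k := by
    intro x hx
    rw [hUL, Submodule.mem_span_range_iff_exists_fun] at hx
    obtain ⟨c, hc⟩ := hx
    have hxi : ∀ i, x i ∈ Submodule.span F (Set.range c) := by
      intro i
      rw [← hc]
      have : (∑ j, c j • u j) i = ∑ j, (bW (Fin.castLE hkt j) i) • c j := by
        rw [Finset.sum_apply]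
        congr 1; funext j
        simp only [Pi.smul_apply, smul_eq_mul, hu, hv, iotaV, Algebra.smul_def]
        ring
      rw [this]
      exact Submodule.sum_mem _ fun j _ =>
        Submodule.smul_mem _ _ (Submodule.subset_span ⟨j, rfl⟩)
    have hle : Submodule.span F (Set.range x) ≤ Submodule.span F (Set.range c) := by
      rw [Submodule.span_le]; rintro _ ⟨i, rfl⟩; exact hxi i
    calc rankWeight F x ≤ Module.finrank F (Submodule.span F (Set.range c)) :=
          Submodule.finrank_mono hle
      _ ≤ Fintype.card (Fin k) := by
          have := finrank_range_le_card (R := F) c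
          simpa [Set.finrank] using this
      _ = k := Fintype.card_fin k
  have hCU : C ⊓ UL = ⊥ := by
    rw [Submodule.eq_bot_iff]
    rintro x ⟨hxC, hxU⟩
    by_contra hx0
    have h1 : k + 1 ≤ rankWeight F x := hcode x hxC hx0
    have h2 := hrw x hxU
    omega
  set D : Submodule L (Fin n → L) := C ⊓ WL with hD
  have hDle : Module.finrank L D + k ≤ t := by
    have hDWL : D ≤ WL := inf_le_right
    have hDU : D ⊓ UL = ⊥ := by
      rw [eq_bot_iff]
      intro x hx
      have hmem : x ∈ C ⊓ UL := ⟨hx.1.1, hx.2⟩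
      rw [hCU] at hmem
      exact hmem
    have hdim := Submodule.finrank_sup_add_finrank_inf_eq D UL
    rw [hDU] at hdim
    simp only [finrank_bot, add_zero] at hdim
    have hsup : Module.finrank L ↥(D ⊔ UL) ≤ t := by
      rw [← hfinWL]
      exact Submodule.finrank_mono (sup_le hDWL hULWL)
    omega
  have hsuptop : C ⊔ WL = ⊤ := by
    apply Submodule.eq_top_of_finrank_eq
    have h1 := Submodule.finrank_sup_add_finrank_inf_eq C WL
    rw [← hD] at h1
    have h2 : Module.finrank L ↥(C ⊔ WL) ≤ n := by
      have := Submodule.finrank_le (C ⊔ WL)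
      rwa [Module.finrank_pi, Fintype.card_fin] at this
    rw [Module.finrank_pi, Fintype.card_fin]
    rw [hfinC, hfinWL] at h1
    omega
  intro s
  obtain ⟨x, hx⟩ := hHsurj s
  have hxmem : x ∈ C ⊔ WL := by rw [hsuptop]; trivial
  rw [Submodule.mem_sup] at hxmem
  obtain ⟨c, hc, w, hw, rfl⟩ := hxmem
  refine ⟨w, ?_, ?_⟩
  · have := hWLker hw
    simpa using this
  · have hc0 : H *ᵥ c = 0 := hc
    rw [Matrix.mulVec_add, hc0, zero_add] at hx
    exact hx

end Auxiliary

lemma sum_fibers {Ω α : Type*} [Fintype Ω] [MeasurableSpace Ω] [MeasurableSingletonClass Ω]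
    (P : Measure Ω) [Fintype α] [DecidableEq α] (Z : Ω → α) (T : Finset α) :
    P {ω | Z ω ∈ T} = ∑ a ∈ T, P {ω | Z ω = a} := by
  have h : {ω | Z ω ∈ T} = ⋃ a ∈ T, {ω | Z ω = a} := by ext ω; simp
  rw [h, measure_biUnion_finset]
  · intro a _ b _ hab
    rw [Function.onFun, Set.disjoint_left]
    intro ω h1 h2
    exact hab (h1.symm.trans h2)
  · intro a _
    exact (Set.toFinite _).measurableSet

lemma mutualInfo_eq_zero_of_indep {Ω α β : Type*} [Fintype α] [Fintype β] [MeasurableSpace Ω]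
    (P : Measure Ω) [IsProbabilityMeasure P] (Xv : Ω → α) (Yv : Ω → β)
    (hindep : ∀ a b, P {ω | Xv ω = a ∧ Yv ω = b} = P {ω | Xv ω = a} * P {ω | Yv ω = b})
    (ha : ∑ a, P {ω | Xv ω = a} = 1) (hb : ∑ b, P {ω | Yv ω = b} = 1) :
    mutualInfo P Xv Yv = 0 := by
  classical
  set pa : α → ℝ := fun a => (P {ω | Xv ω = a}).toReal with hpa
  set pb : β → ℝ := fun b => (P {ω | Yv ω = b}).toReal with hpb
  have hane : ∀ a, P {ω | Xv ω = a} ≠ ⊤ := fun a => measure_ne_top P _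
  have hbne : ∀ b, P {ω | Yv ω = b} ≠ ⊤ := fun b => measure_ne_top P _
  have hsa : ∑ a, pa a = 1 := by
    rw [hpa]
    rw [← ENNReal.toReal_sum (fun a _ => hane a), ha, ENNReal.toReal_one]
  have hsb : ∑ b, pb b = 1 := by
    rw [hpb]
    rw [← ENNReal.toReal_sum (fun b _ => hbne b), hb, ENNReal.toReal_one]
  have hjoint : ∀ a b, (P {ω | Xv ω = a ∧ Yv ω = b}).toReal = pa a * pb b := by
    intro a b
    rw [hindep, ENNReal.toReal_mul]
  have hpair : entropy P (fun ω => (Xv ω, Yv ω)) = entropy P Xv + entropy P Yv := by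
    unfold entropy
    rw [Fintype.sum_prod_type]
    have hterm : ∀ (a : α) (b : β),
        (P {ω | (Xv ω, Yv ω) = (a, b)}).toReal * Real.log (P {ω | (Xv ω, Yv ω) = (a, b)}).toReal
        = pa a * pb b * Real.log (pa a) + pa a * pb b * Real.log (pb b) := by
      intro a b
      have hset : {ω | (Xv ω, Yv ω) = (a, b)} = {ω | Xv ω = a ∧ Yv ω = b} := by
        ext ω; simp [Prod.ext_iff]
      rw [hset, hjoint]
      rcases eq_or_ne (pa a) 0 with h | h
      · simp [h]
      rcases eq_or_ne (pb b) 0 with h' | h'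
      · simp [h']
      rw [Real.log_mul h h']
      ring
    simp only [hterm]
    rw [← neg_add]
    congr 1
    have hrow : ∀ a : α, ∑ b : β, (pa a * pb b * Real.log (pa a) + pa a * pb b * Real.log (pb b))
        = pa a * Real.log (pa a) + pa a * (∑ b, pb b * Real.log (pb b)) := by
      intro a
      rw [Finset.sum_add_distrib]
      congr 1
      · rw [← Finset.sum_mul]
        rw [show ∑ b : β, pa a * pb b = pa a * ∑ b, pb b by rw [Finset.mul_sum]]
        rw [hsb, mul_one]
      · rw [Finset.mul_sum]
        congr 1; funext b; ring
    simp only [hrow]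
    rw [Finset.sum_add_distrib, ← Finset.sum_mul, hsa, one_mul]
  unfold mutualInfo
  rw [hpair]
  ring

/-- Coset coding with an MRD code: if `m ≥ n`, `H` has full rank `k`, the code
`{x : Hx = 0}` has minimum rank distance `k + 1`, `μ ≤ n - k`, `S = HX` and `X` is
conditionally uniform on the coset `{x : Hx = s}` given `S = s`, then `I(S;BX) = 0`
for every `B ∈ F^{μ×n}` (universal security under `μ` observations). -/
theorem cosetCoding_MRD_universally_secure
    (q m : ℕ) (hq : IsPrimePow q)
    (F L : Type) [Field F] [Fintype F] (hF : Fintype.card F = q)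
    [Field L] [Fintype L] [Algebra F L] (hm : Module.finrank F L = m)
    (n k : ℕ) (hmn : n ≤ m) (hk : 1 ≤ k) (hkn : k < n)
    (H : Matrix (Fin k) (Fin n) L) (hH : H.rank = k)
    (hMRD : minRankDistEq F {x : Fin n → L | H *ᵥ x = 0} (k + 1))
    (μ : ℕ) (hμ : μ ≤ n - k)
    (Ω : Type) [Fintype Ω] [MeasurableSpace Ω] [MeasurableSingletonClass Ω]
    (P : Measure Ω) [IsProbabilityMeasure P]
    (S : Ω → Fin k → L) (X : Ω → Fin n → L)
    (hSX : ∀ ω, H *ᵥ X ω = S ω)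
    (hXunif : ∀ s : Fin k → L, ∀ x₁ x₂ : Fin n → L, H *ᵥ x₁ = s → H *ᵥ x₂ = s →
      P {ω | S ω = s ∧ X ω = x₁} = P {ω | S ω = s ∧ X ω = x₂}) :
    ∀ B : Matrix (Fin μ) (Fin n) F,
      mutualInfo P S (fun ω => (B.map (algebraMap F L)) *ᵥ X ω) = 0 := by
  classical
  intro B
  set B' : Matrix (Fin μ) (Fin n) L := B.map (algebraMap F L) with hB'
  set Y : Ω → Fin μ → L := fun ω => B' *ᵥ X ω with hY
  -- minimum distance gives the codeword weight bound
  have hcode : ∀ c : Fin n → L, H *ᵥ c = 0 → c ≠ 0 → k + 1 ≤ rankWeight F c := by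
    intro c hc hc0
    have hmem : rankWeight F c ∈
        {e | ∃ x ∈ {x : Fin n → L | H *ᵥ x = 0}, ∃ y ∈ {x : Fin n → L | H *ᵥ x = 0},
          x ≠ y ∧ rankWeight F (x - y) = e} := by
      refine ⟨c, hc, 0, ?_, hc0, by rw [sub_zero]⟩
      simp [Set.mem_setOf_eq]
    exact hMRD.2 hmem
  have crux := crux_exists hkn H hH hcode B hμ
  have hHsurj : ∀ s : Fin k → L, ∃ x, H *ᵥ x = s := fun s => (crux s).imp fun z h => h.2
  -- the common fiber probability
  set g : (Fin k → L) → ENNReal := fun s => P {ω | X ω = (hHsurj s).choose} with hg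
  have hfx : ∀ x : Fin n → L, P {ω | X ω = x} = g (H *ᵥ x) := by
    intro x
    have hch : H *ᵥ (hHsurj (H *ᵥ x)).choose = H *ᵥ x := (hHsurj (H *ᵥ x)).choose_spec
    have h1 : {ω | S ω = H *ᵥ x ∧ X ω = x} = {ω | X ω = x} := by
      ext ω
      exact ⟨fun h => h.2, fun hx => ⟨by rw [← hSX, hx], hx⟩⟩
    have h2 : {ω | S ω = H *ᵥ x ∧ X ω = (hHsurj (H *ᵥ x)).choose}
        = {ω | X ω = (hHsurj (H *ᵥ x)).choose} := by
      ext ω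
      exact ⟨fun h => h.2, fun hx => ⟨by rw [← hSX, hx, hch], hx⟩⟩
    calc P {ω | X ω = x} = P {ω | S ω = H *ᵥ x ∧ X ω = x} := by rw [h1]
      _ = P {ω | S ω = H *ᵥ x ∧ X ω = (hHsurj (H *ᵥ x)).choose} :=
          hXunif _ _ _ rfl hch
      _ = g (H *ᵥ x) := by rw [h2, hg]
  -- fibers as finsets
  set A : (Fin k → L) → Finset (Fin n → L) :=
    fun s => Finset.univ.filter (fun x => H *ᵥ x = s) with hA
  set AB : (Fin k → L) → (Fin μ → L) → Finset (Fin n → L) :=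
    fun s y => Finset.univ.filter (fun x => H *ᵥ x = s ∧ B' *ᵥ x = y) with hAB
  -- cardinalities do not depend on s
  have cardA : ∀ s, (A s).card = (A 0).card := by
    intro s
    obtain ⟨z, hz1, hz2⟩ := crux s
    refine (Finset.card_bij' (fun x _ => x + z) (fun x _ => x - z) ?_ ?_ ?_ ?_).symm
    · intro x hx
      simp only [hA, Finset.mem_filter, Finset.mem_univ, true_and] at hx ⊢
      rw [Matrix.mulVec_add, hx, hz2, zero_add]
    · intro x hx
      simp only [hA, Finset.mem_filter, Finset.mem_univ, true_and] at hx ⊢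
      rw [Matrix.mulVec_sub, hx, hz2, sub_self]
    · intro x _; simp
    · intro x _; simp
  have cardAB : ∀ s y, (AB s y).card = (AB 0 y).card := by
    intro s y
    obtain ⟨z, hz1, hz2⟩ := crux s
    refine (Finset.card_bij' (fun x _ => x + z) (fun x _ => x - z) ?_ ?_ ?_ ?_).symm
    · intro x hx
      simp only [hAB, Finset.mem_filter, Finset.mem_univ, true_and] at hx ⊢
      constructor
      · rw [Matrix.mulVec_add, hx.1, hz2, zero_add]
      · rw [Matrix.mulVec_add, hx.2, hz1, add_zero]
    · intro x hx
      simp only [hAB, Finset.mem_filter, Finset.mem_univ, true_and] at hx ⊢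
      constructor
      · rw [Matrix.mulVec_sub, hx.1, hz2, sub_self]
      · rw [Matrix.mulVec_sub, hx.2, hz1, sub_zero]
    · intro x _; simp
    · intro x _; simp
  -- probability of the fibers
  have eS : ∀ s, P {ω | S ω = s} = ((A 0).card : ENNReal) * g s := by
    intro s
    have hset : {ω | S ω = s} = {ω | X ω ∈ A s} := by
      ext ω
      simp only [hA, Set.mem_setOf_eq, Finset.mem_filter, Finset.mem_univ, true_and, hSX]
    rw [hset, sum_fibers]
    have : ∀ x ∈ A s, P {ω | X ω = x} = g s := by
      intro x hx
      simp only [hA, Finset.mem_filter, Finset.mem_univ, true_and] at hx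
      rw [hfx, hx]
    rw [Finset.sum_congr rfl this, Finset.sum_const, nsmul_eq_mul, cardA]
  have eSY : ∀ s y, P {ω | S ω = s ∧ Y ω = y} = ((AB 0 y).card : ENNReal) * g s := by
    intro s y
    have hset : {ω | S ω = s ∧ Y ω = y} = {ω | X ω ∈ AB s y} := by
      ext ω
      simp only [hAB, Set.mem_setOf_eq, Finset.mem_filter, Finset.mem_univ, true_and, hSX, hY]
    rw [hset, sum_fibers]
    have : ∀ x ∈ AB s y, P {ω | X ω = x} = g s := by
      intro x hx
      simp only [hAB, Finset.mem_filter, Finset.mem_univ, true_and] at hx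
      rw [hfx, hx.1]
    rw [Finset.sum_congr rfl this, Finset.sum_const, nsmul_eq_mul, cardAB]
  have eY : ∀ y, P {ω | Y ω = y} = ((AB 0 y).card : ENNReal) * ∑ s, g s := by
    intro y
    have hset : {ω | Y ω = y}
        = {ω | X ω ∈ Finset.univ.filter (fun x => B' *ᵥ x = y)} := by
      ext ω
      simp only [Set.mem_setOf_eq, Finset.mem_filter, Finset.mem_univ, true_and, hY]
    rw [hset, sum_fibers]
    have hfib := Finset.sum_fiberwise_of_maps_to
      (g := fun x : Fin n → L => H *ᵥ x) (t := Finset.univ)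
      (fun x _ => Finset.mem_univ _) (fun x => P {ω | X ω = x})
      (s := Finset.univ.filter (fun x => B' *ᵥ x = y))
    rw [← hfib]
    rw [Finset.mul_sum]
    apply Finset.sum_congr rfl
    intro s _
    have hAB' : (Finset.univ.filter (fun x => B' *ᵥ x = y)).filter (fun x => H *ᵥ x = s)
        = AB s y := by
      ext x
      simp only [hAB, Finset.mem_filter, Finset.mem_univ, true_and]
      tauto
    rw [hAB']
    have : ∀ x ∈ AB s y, P {ω | X ω = x} = g s := by
      intro x hx
      simp only [hAB, Finset.mem_filter, Finset.mem_univ, true_and] at hx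
      rw [hfx, hx.1]
    rw [Finset.sum_congr rfl this, Finset.sum_const, nsmul_eq_mul, cardAB]
  -- total probabilities
  have hsumS : ∑ s, P {ω | S ω = s} = 1 := by
    have := sum_fibers P S (Finset.univ : Finset (Fin k → L))
    simp only [Finset.mem_univ, Set.setOf_true] at this
    rw [← this, measure_univ]
  have hsumY : ∑ y, P {ω | Y ω = y} = 1 := by
    have := sum_fibers P Y (Finset.univ : Finset (Fin μ → L))
    simp only [Finset.mem_univ, Set.setOf_true] at this
    rw [← this, measure_univ]
  have hNG : ((A 0).card : ENNReal) * ∑ s, g s = 1 := by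
    rw [Finset.mul_sum]
    rw [← hsumS]
    exact Finset.sum_congr rfl fun s _ => (eS s).symm
  -- independence
  have hindep : ∀ s y, P {ω | S ω = s ∧ Y ω = y} = P {ω | S ω = s} * P {ω | Y ω = y} := by
    intro s y
    rw [eSY, eS, eY]
    calc ((AB 0 y).card : ENNReal) * g s
        = (((A 0).card : ENNReal) * ∑ s', g s') * (((AB 0 y).card : ENNReal) * g s) := by
          rw [hNG, one_mul]
      _ = ((A 0).card : ENNReal) * g s * (((AB 0 y).card : ENNReal) * ∑ s', g s') := by
          ring
  have := mutualInfo_eq_zero_of_indep P S Y hindep hsumS hsumY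
  exact this
end

section
/- Let q be a prime power, n and m positive integers, μ an integer with 1 ≤ μ ≤ n − 1, and k = n − μ. Let S be a random variable with values in a finite set 𝒮 and let X be a jointly distributed random variable with values in Fq^{n×m}. Assume: (i) H(S) = k·m·log q (the message has entropy of k packets); (ii) there is a function f : Fq^{n×m} → 𝒮 with S = f(X) almost surely (zero-error communication over a noiseless network); and (iii) I(S; BX) = 0 for every matrix B ∈ Fq^{μ×n} (universal security under μ observations). Then m ≥ n. -/
set_option autoImplicit false

open Matrix MeasureTheory

/-!
Zero mutual information makes the joint support of `S` and `BX` the product of the two supports.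
Hence every coset `{x | B x = B x₀}` of a full-rank `B ∈ F^{μ×n}` through a possible value `x₀`
of `X` contains, among the possible values of `X`, a preimage under the decoder of every
possible message. Such a coset has `q^{km}` elements, while `H(S) = km log q` forces at least
`q^{km}` possible messages; so the whole coset is possible and the decoder is injective on it.
Every matrix `d` of rank at most `k` satisfies `B d = 0` for some full-rank `B`; as `k ≥ 1` this
applies to matrix units, and adding them one at a time shows that every matrix is possible.

Now fix a message `s₀`. Its decoding region meets every coset of a fixed full-rank `B₀`, so it
has at least `q^{μm}` elements, and two of its elements never differ by a matrix of rank `≤ k`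
(such a difference is killed by some full-rank `B`). By the Singleton bound for rank
distance (puncture `k` columns) it has at most `q^{n(m-k)}` elements, so `μm ≤ n(m-k)`, which
with `n = μ + k` means `n ≤ m`.
-/

theorem Set.subset_and_injOn_of_surjOn_of_ncard_le {α β : Type*} {C X : Set α} {T : Set β}
    {f : α → β} (hC : C.Finite) (hf : Set.SurjOn f (C ∩ X) T) (hT : C.ncard ≤ T.ncard) :
    C ⊆ X ∧ Set.InjOn f C := by
  have hCX : (C ∩ X).Finite := hC.inter_of_left X
  have himage : T.ncard ≤ (f '' (C ∩ X)).ncard := Set.ncard_le_ncard hf (hCX.image f)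
  have heq : C ∩ X = C := Set.eq_of_subset_of_ncard_le Set.inter_subset_left
    (hT.trans (himage.trans (Set.ncard_image_le hCX))) hC
  rw [heq] at himage
  exact ⟨Set.inter_eq_left.1 heq, Set.injOn_of_ncard_image_eq
    (le_antisymm (Set.ncard_image_le hC) (hT.trans himage)) hC⟩

theorem Nat.le_of_mul_le_mul_sub_sub {n m μ : ℕ} (hμ : 0 < μ) (hμn : μ < n) (hm : 0 < m)
    (h : μ * m ≤ n * (m - (n - μ))) : n ≤ m := by
  obtain ⟨k, rfl⟩ : ∃ k, n = μ + k := ⟨n - μ, by omega⟩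
  rcases le_or_gt k m with hkm | hmk
  · obtain ⟨r, rfl⟩ : ∃ r, m = k + r := ⟨m - k, by omega⟩
    simp only [Nat.add_sub_cancel_left] at h
    have : μ ≤ r := Nat.le_of_mul_le_mul_left (show k * μ ≤ k * r by nlinarith) (by omega)
    omega
  · rw [show m - (μ + k - μ) = 0 by omega, mul_zero] at h
    exact absurd h (Nat.mul_pos hμ hm).not_ge

theorem AddMonoidHom.ncard_fiber_mul_card_of_surjective {G M : Type*} [AddGroup G] [Fintype G]
    [AddMonoid M] [Fintype M] (f : G →+ M) (hf : Function.Surjective f) (y : M) :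
    {g | f g = y}.ncard * Fintype.card M = Fintype.card G := by
  classical
  have hfiber (z : M) : (Finset.univ.filter fun g => f g = z).card =
      (Finset.univ.filter fun g => f g = y).card :=
    card_fiber_eq_of_mem_range f (hf z) (hf y)
  calc {g | f g = y}.ncard * Fintype.card M
      = ∑ z : M, (Finset.univ.filter fun g => f g = z).card := by
        simp [hfiber, Set.ncard_eq_toFinset_card', mul_comm]
    _ = Fintype.card G := by
        rw [← Finset.card_univ (α := G), Finset.card_eq_sum_card_fiberwise (f := f)
          (t := Finset.univ) fun _ _ => Finset.mem_univ _]

theorem Fintype.card_matrix {α β R : Type*} [Fintype α] [Fintype β] [DecidableEq α]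
    [DecidableEq β] [Fintype R] :
    Fintype.card (Matrix α β R) = Fintype.card R ^ (Fintype.card α * Fintype.card β) := by
  rw [Fintype.card_congr Matrix.of.symm, Fintype.card_fun, Fintype.card_fun, ← pow_mul, mul_comm]

namespace Matrix

variable {F : Type*} [Field F] {ι ι' κ : Type*}

theorem rank_le_card_of_forall_notMem_eq_zero [Fintype ι'] [DecidableEq ι'] (A : Matrix ι ι' F)
    (T : Finset ι') (hA : ∀ j ∉ T, ∀ i, A i j = 0) : A.rank ≤ T.card := by
  set D := diagonal fun j => if j ∈ T then (1 : F) else 0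
  have hAD : A = A * D := by
    ext i j
    by_cases hj : j ∈ T <;> simp [D, hj, hA]
  calc A.rank = (A * D).rank := by rw [← hAD]
    _ ≤ D.rank := rank_mul_le_right _ _
    _ = T.card := by
      classical
      rw [rank_diagonal, Fintype.card_subtype]
      congr 1
      ext j
      simp

/-- The Singleton bound for codes in the rank metric. -/
theorem ncard_le_of_forall_rank_sub_le_imp_eq [Fintype ι] [Fintype ι'] [Fintype F] (k : ℕ)
    (C : Set (Matrix ι ι' F)) (hC : ∀ x ∈ C, ∀ y ∈ C, (x - y).rank ≤ k → x = y) :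
    C.ncard ≤ Fintype.card F ^ (Fintype.card ι * (Fintype.card ι' - k)) := by
  classical
  obtain ⟨T, -, hT⟩ := Finset.exists_subset_card_eq (s := (Finset.univ : Finset ι'))
    (n := min k (Fintype.card ι')) (by simp)
  let puncture : Matrix ι ι' F → ι → {j // j ∉ T} → F := fun x i j => x i j.1
  have hinj : Set.InjOn puncture C := by
    intro x hx y hy hxy
    refine hC x hx y hy ((rank_le_card_of_forall_notMem_eq_zero _ T fun j hj i => ?_).trans ?_)
    · simpa [sub_eq_zero] using congrFun (congrFun hxy i) ⟨j, hj⟩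
    · exact hT ▸ min_le_left _ _
  calc C.ncard ≤ (Set.univ : Set (ι → {j // j ∉ T} → F)).ncard :=
        Set.ncard_le_ncard_of_injOn puncture (fun _ _ => trivial) hinj
    _ = Fintype.card F ^ (Fintype.card ι * (Fintype.card ι' - k)) := by
        rw [Set.ncard_univ, Nat.card_eq_fintype_card]
        simp only [Fintype.card_fun, Fintype.card_subtype_compl, Fintype.card_coe, hT,
          ← pow_mul]
        rw [mul_comm]
        congr 2
        omega

theorem exists_surjective_mulVecLin_mul_eq_zero [Fintype ι] [Fintype ι'] [Fintype κ]
    [DecidableEq ι] (d : Matrix ι ι' F) (h : d.rank + Fintype.card κ ≤ Fintype.card ι) :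
    ∃ B : Matrix κ ι F, Function.Surjective B.mulVecLin ∧ B * d = 0 := by
  classical
  set V := LinearMap.range d.mulVecLin
  have hV : d.rank = Module.finrank F V := rfl
  have hQ : Fintype.card κ ≤ Fintype.card (Fin (Module.finrank F ((ι → F) ⧸ V))) := by
    have := V.finrank_quotient_add_finrank
    rw [Module.finrank_fintype_fun_eq_card] at this
    rw [Fintype.card_fin]
    omega
  obtain ⟨e⟩ := Function.Embedding.nonempty_of_card_le hQ
  let g : (ι → F) →ₗ[F] κ → F := LinearMap.funLeft F F e ∘ₗ
    (Module.finBasis F ((ι → F) ⧸ V)).equivFun.toLinearMap ∘ₗ V.mkQ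
  have hg : (LinearMap.toMatrix' g).mulVecLin = g := by
    rw [← toLin'_apply', toLin'_toMatrix']
  refine ⟨LinearMap.toMatrix' g, ?_, ?_⟩
  · rw [hg]
    exact (LinearMap.funLeft_surjective_of_injective F F e e.injective).comp
      ((Module.finBasis F _).equivFun.surjective.comp V.mkQ_surjective)
  · apply EquivLike.injective (toLin' (R := F) (m := κ) (n := ι'))
    rw [map_zero, toLin'_apply', mulVecLin_mul, hg]
    have : V.mkQ ∘ₗ d.mulVecLin = 0 := LinearMap.range_le_ker_iff.1 (by rw [Submodule.ker_mkQ])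
    simp only [g, LinearMap.comp_assoc, this, LinearMap.comp_zero]

theorem surjective_mul_left_of_surjective_mulVecLin [Fintype ι] {B : Matrix κ ι F}
    (hB : Function.Surjective B.mulVecLin) :
    Function.Surjective fun x : Matrix ι ι' F => B * x := by
  intro y
  choose v hv using fun j => hB fun i => y i j
  exact ⟨of fun l j => v j l, by ext i j; exact congrFun (hv j) i⟩

theorem ncard_setOf_mul_eq_mul_mul_card_pow [Fintype ι] [Fintype ι'] [Fintype κ] [Fintype F]
    (B : Matrix κ ι F) (hB : Function.Surjective B.mulVecLin) (x₀ : Matrix ι ι' F) :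
    {x | B * x = B * x₀}.ncard * Fintype.card F ^ (Fintype.card κ * Fintype.card ι') =
      Fintype.card F ^ (Fintype.card ι * Fintype.card ι') := by
  classical
  have := (mulLeftLinearMap ι' F B).toAddMonoidHom.ncard_fiber_mul_card_of_surjective
    (surjective_mul_left_of_surjective_mulVecLin hB) (B * x₀)
  rwa [Fintype.card_matrix, Fintype.card_matrix] at this

end Matrix

namespace Real

theorem sub_le_mul_log_sub {p u : ℝ} (hp : 0 ≤ p) (hu : 0 ≤ u) (hpu : p ≠ 0 → u ≠ 0) :
    p - u ≤ p * (log p - log u) := by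
  rcases hp.eq_or_lt with rfl | hp
  · simpa using hu
  have hu := hu.lt_of_ne' (hpu hp.ne')
  have := one_sub_inv_le_log_of_pos (div_pos hp hu)
  rw [log_div hp.ne' hu.ne', inv_div] at this
  calc p - u = p * (1 - u / p) := by field_simp
    _ ≤ p * (log p - log u) := mul_le_mul_of_nonneg_left this hp.le

/-- Equality case of Gibbs' inequality. -/
theorem eq_zero_of_sum_mul_log_sub_eq_zero {ι : Type*} [Fintype ι] {p u : ι → ℝ}
    (hp : ∀ i, 0 ≤ p i) (hu : ∀ i, 0 ≤ u i) (hpu : ∀ i, p i ≠ 0 → u i ≠ 0)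
    (hsum : ∑ i, u i ≤ ∑ i, p i) (h : ∑ i, p i * (log (p i) - log (u i)) = 0) {i : ι}
    (hi : p i = 0) : u i = 0 := by
  have hgap (j : ι) : 0 ≤ p j * (log (p j) - log (u j)) - (p j - u j) :=
    sub_nonneg.2 (sub_le_mul_log_sub (hp j) (hu j) (hpu j))
  have hzero : ∑ j, (p j * (log (p j) - log (u j)) - (p j - u j)) = 0 := by
    refine le_antisymm ?_ (Finset.sum_nonneg fun j _ => hgap j)
    rw [Finset.sum_sub_distrib, h, Finset.sum_sub_distrib]
    linarith
  simpa [hi] using (Finset.sum_eq_zero_iff_of_nonneg fun j _ => hgap j).1 hzero i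
    (Finset.mem_univ i)

end Real

section Probability

open Real

variable {Ω α β : Type*} [MeasurableSpace Ω] (P : Measure Ω)

theorem sum_toReal_measure_fiber [DiscreteMeasurableSpace Ω] [IsProbabilityMeasure P]
    [Fintype α] (X : Ω → α) : ∑ a, (P {ω | X ω = a}).toReal = 1 := by
  have := sum_measure_preimage_singleton (μ := P) Finset.univ (f := X)
    fun _ _ => MeasurableSet.of_discrete
  rw [Finset.coe_univ, Set.preimage_univ, measure_univ] at this
  rw [← ENNReal.toReal_sum fun _ _ => measure_ne_top P _]
  exact congrArg ENNReal.toReal this |>.trans ENNReal.toReal_one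

theorem toReal_measure_fiber_eq_sum_fst [DiscreteMeasurableSpace Ω] [IsFiniteMeasure P]
    [Fintype β] (X : Ω → α) (Y : Ω → β) (a : α) :
    (P {ω | X ω = a}).toReal = ∑ b, (P {ω | (X ω, Y ω) = (a, b)}).toReal := by
  classical
  rw [← ENNReal.toReal_sum fun _ _ => measure_ne_top P _]
  have := sum_measure_preimage_singleton (μ := P) ({a} ×ˢ Finset.univ)
    (f := fun ω => (X ω, Y ω)) fun _ _ => MeasurableSet.of_discrete
  rw [Finset.sum_product, Finset.sum_singleton] at this
  congr 1
  convert this.symm using 2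
  · ext ω
    simp [eq_comm]
  · rfl

theorem toReal_measure_fiber_eq_sum_snd [DiscreteMeasurableSpace Ω] [IsFiniteMeasure P]
    [Fintype α] (X : Ω → α) (Y : Ω → β) (b : β) :
    (P {ω | Y ω = b}).toReal = ∑ a, (P {ω | (X ω, Y ω) = (a, b)}).toReal := by
  classical
  rw [← ENNReal.toReal_sum fun _ _ => measure_ne_top P _]
  have := sum_measure_preimage_singleton (μ := P) (Finset.univ ×ˢ {b})
    (f := fun ω => (X ω, Y ω)) fun _ _ => MeasurableSet.of_discrete
  rw [Finset.sum_product, Finset.sum_congr rfl fun _ _ => Finset.sum_singleton _ _] at this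
  congr 1
  convert this.symm using 2
  · ext ω
    simp [eq_comm]
  · rfl

theorem toReal_measure_pair_le_fst [IsFiniteMeasure P] (X : Ω → α) (Y : Ω → β) (c : α × β) :
    (P {ω | (X ω, Y ω) = c}).toReal ≤ (P {ω | X ω = c.1}).toReal :=
  ENNReal.toReal_mono (measure_ne_top P _) (measure_mono fun _ hω => congrArg Prod.fst hω)

theorem toReal_measure_pair_le_snd [IsFiniteMeasure P] (X : Ω → α) (Y : Ω → β) (c : α × β) :
    (P {ω | (X ω, Y ω) = c}).toReal ≤ (P {ω | Y ω = c.2}).toReal :=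
  ENNReal.toReal_mono (measure_ne_top P _) (measure_mono fun _ hω => congrArg Prod.snd hω)

theorem exp_entropy_le_ncard [DiscreteMeasurableSpace Ω] [IsProbabilityMeasure P] [Fintype α]
    (X : Ω → α) : exp (entropy P X) ≤ {a | P {ω | X ω = a} ≠ 0}.ncard := by
  classical
  set w : α → ℝ := fun a => (P {ω | X ω = a}).toReal
  set s := Finset.univ.filter fun a => w a ≠ 0
  have hsupp : {a | P {ω | X ω = a} ≠ 0} = s := by
    ext a
    simp [s, w, ENNReal.toReal_eq_zero_iff, measure_ne_top]
  have hw : ∑ a ∈ s, w a = 1 := by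
    rw [Finset.sum_filter_ne_zero]
    exact sum_toReal_measure_fiber P X
  have hs : (0 : ℝ) < s.card := by
    rcases s.eq_empty_or_nonempty with h | h
    · simp [h] at hw
    · exact_mod_cast h.card_pos
  have hent : entropy P X = -∑ a ∈ s, w a * log (w a) := by
    rw [entropy, Finset.sum_filter_of_ne fun a _ h => left_ne_zero_of_mul h]
  -- Gibbs' inequality against the uniform distribution on the support `s`
  have hgibbs : ∑ a ∈ s, (w a - (s.card : ℝ)⁻¹) ≤ ∑ a ∈ s, w a * (log (w a) - log (s.card)⁻¹) :=
    Finset.sum_le_sum fun a _ =>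
      sub_le_mul_log_sub ENNReal.toReal_nonneg (by positivity) fun _ => by positivity
  rw [Finset.sum_sub_distrib, hw, Finset.sum_const, nsmul_eq_mul, mul_inv_cancel₀ hs.ne']
    at hgibbs
  simp only [mul_sub, Finset.sum_sub_distrib, log_inv, mul_neg, Finset.sum_neg_distrib,
    ← Finset.sum_mul, hw, one_mul] at hgibbs
  rw [hsupp, Set.ncard_coe_finset, ← exp_log hs, exp_le_exp, hent]
  linarith

theorem mutualInfo_eq_sum_mul_log_sub [DiscreteMeasurableSpace Ω] [IsFiniteMeasure P]
    [Fintype α] [Fintype β] (X : Ω → α) (Y : Ω → β) :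
    mutualInfo P X Y = ∑ c : α × β, (P {ω | (X ω, Y ω) = c}).toReal *
      (log (P {ω | (X ω, Y ω) = c}).toReal -
        log ((P {ω | X ω = c.1}).toReal * (P {ω | Y ω = c.2}).toReal)) := by
  set j : α × β → ℝ := fun c => (P {ω | (X ω, Y ω) = c}).toReal
  set pX : α → ℝ := fun a => (P {ω | X ω = a}).toReal
  set pY : β → ℝ := fun b => (P {ω | Y ω = b}).toReal
  have hX : ∑ a, pX a * log (pX a) = ∑ c, j c * log (pX c.1) := by
    rw [Fintype.sum_prod_type]
    refine Finset.sum_congr rfl fun a _ => ?_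
    change pX a * log (pX a) = ∑ b, j (a, b) * log (pX a)
    rw [← Finset.sum_mul, ← toReal_measure_fiber_eq_sum_fst]
  have hY : ∑ b, pY b * log (pY b) = ∑ c, j c * log (pY c.2) := by
    rw [Fintype.sum_prod_type, Finset.sum_comm]
    refine Finset.sum_congr rfl fun b _ => ?_
    change pY b * log (pY b) = ∑ a, j (a, b) * log (pY b)
    rw [← Finset.sum_mul, ← toReal_measure_fiber_eq_sum_snd]
  have hterm (c : α × β) : j c * (log (j c) - log (pX c.1 * pY c.2)) =
      j c * log (j c) - j c * log (pX c.1) - j c * log (pY c.2) := by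
    rcases eq_or_ne (j c) 0 with hc | hc
    · simp [hc]
    have hj : 0 < j c := ENNReal.toReal_nonneg.lt_of_ne' hc
    rw [log_mul (hj.trans_le (toReal_measure_pair_le_fst P X Y c)).ne'
      (hj.trans_le (toReal_measure_pair_le_snd P X Y c)).ne']
    ring
  rw [mutualInfo, entropy, entropy, entropy, Finset.sum_congr rfl fun c _ => hterm c]
  simp only [Finset.sum_sub_distrib]
  change -∑ a, pX a * log (pX a) + -∑ b, pY b * log (pY b) - -∑ c, j c * log (j c) = _
  rw [hX, hY]
  ring

theorem measure_pair_ne_zero_of_mutualInfo_eq_zero [DiscreteMeasurableSpace Ω]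
    [IsProbabilityMeasure P] [Fintype α] [Fintype β] (X : Ω → α) (Y : Ω → β)
    (hI : mutualInfo P X Y = 0) {a : α} {b : β} (ha : P {ω | X ω = a} ≠ 0)
    (hb : P {ω | Y ω = b} ≠ 0) : P {ω | (X ω, Y ω) = (a, b)} ≠ 0 := by
  set j : α × β → ℝ := fun c => (P {ω | (X ω, Y ω) = c}).toReal
  set u : α × β → ℝ := fun c => (P {ω | X ω = c.1}).toReal * (P {ω | Y ω = c.2}).toReal
  have hju (c : α × β) (hc : j c ≠ 0) : u c ≠ 0 := by
    have hj : 0 < j c := ENNReal.toReal_nonneg.lt_of_ne' hc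
    exact mul_ne_zero (hj.trans_le (toReal_measure_pair_le_fst P X Y c)).ne'
      (hj.trans_le (toReal_measure_pair_le_snd P X Y c)).ne'
  have hsum : ∑ c, u c ≤ ∑ c, j c := by
    rw [sum_toReal_measure_fiber, Fintype.sum_prod_type]
    change ∑ a, ∑ b, (P {ω | X ω = a}).toReal * (P {ω | Y ω = b}).toReal ≤ 1
    rw [← Finset.sum_mul_sum, sum_toReal_measure_fiber, sum_toReal_measure_fiber, one_mul]
  intro hab
  have := eq_zero_of_sum_mul_log_sub_eq_zero (fun _ => ENNReal.toReal_nonneg)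
    (fun _ => by positivity) hju hsum (mutualInfo_eq_sum_mul_log_sub P X Y ▸ hI) (i := (a, b))
    ((congrArg ENNReal.toReal hab).trans ENNReal.toReal_zero)
  simp [u, ENNReal.toReal_eq_zero_iff, ha, hb] at this

theorem exists_measure_singleton_ne_zero [Countable Ω] {p : Ω → Prop} (h : P {ω | p ω} ≠ 0) :
    ∃ ω, p ω ∧ P {ω} ≠ 0 := by
  by_contra! hcon
  exact h ((measure_null_iff_singleton (Set.to_countable _)).2 hcon)

theorem measure_fiber_ne_zero_of_measure_singleton_ne_zero (Z : Ω → α) {ω : Ω}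
    (hω : P {ω} ≠ 0) : P {ω' | Z ω' = Z ω} ≠ 0 :=
  fun h => hω (measure_mono_null (show {ω} ⊆ {ω' | Z ω' = Z ω} from
    Set.singleton_subset_iff.2 rfl) h)

theorem exists_eq_of_mutualInfo_eq_zero [Countable Ω] [MeasurableSingletonClass Ω]
    [IsProbabilityMeasure P] {γ 𝒮 : Type*} [Fintype β] [Fintype 𝒮] {S : Ω → 𝒮} {Z : Ω → γ}
    {f : γ → 𝒮} (hf : ∀ᵐ ω ∂P, S ω = f (Z ω)) (g : γ → β)
    (hI : mutualInfo P S (fun ω => g (Z ω)) = 0) {z₀ : γ} {s : 𝒮}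
    (hz₀ : P {ω | Z ω = z₀} ≠ 0) (hs : P {ω | S ω = s} ≠ 0) :
    ∃ z, P {ω | Z ω = z} ≠ 0 ∧ g z = g z₀ ∧ f z = s := by
  have hobs : P {ω | g (Z ω) = g z₀} ≠ 0 :=
    fun h => hz₀ (measure_mono_null (fun _ hω => congrArg g hω) h)
  obtain ⟨ω, hω, hPω⟩ := exists_measure_singleton_ne_zero P
    (measure_pair_ne_zero_of_mutualInfo_eq_zero P S _ hI hs hobs)
  rw [Prod.mk.injEq] at hω
  refine ⟨Z ω, measure_fiber_ne_zero_of_measure_singleton_ne_zero P Z hPω, hω.2, ?_⟩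
  rw [← hω.1, ae_iff_of_countable.1 hf ω hPω]

end Probability

section SecureCode

variable {F : Type*} [Field F] [Fintype F] {ι ι' 𝒮 : Type*} [Fintype ι] [Fintype ι']

/-- The trace left by zero-error decoding `f` and `I(S; BX) = 0` for all full-rank `B` on the
supports `𝒳` of `X` and `T` of `S`. -/
def CosetsCarryAllMessages (κ : Type*) [Fintype κ] (𝒳 : Set (Matrix ι ι' F))
    (f : Matrix ι ι' F → 𝒮) (T : Set 𝒮) : Prop :=
  ∀ B : Matrix κ ι F, Function.Surjective B.mulVecLin →
    ∀ x₀ ∈ 𝒳, ∀ s ∈ T, ∃ x ∈ 𝒳, B * x = B * x₀ ∧ f x = s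

variable {κ : Type*} [Fintype κ] {𝒳 : Set (Matrix ι ι' F)} {f : Matrix ι ι' F → 𝒮} {T : Set 𝒮}

theorem CosetsCarryAllMessages.coset_subset_and_injOn (H : CosetsCarryAllMessages κ 𝒳 f T)
    (hT : Fintype.card F ^ ((Fintype.card ι - Fintype.card κ) * Fintype.card ι') ≤ T.ncard)
    {B : Matrix κ ι F} (hB : Function.Surjective B.mulVecLin) {x₀ : Matrix ι ι' F}
    (hx₀ : x₀ ∈ 𝒳) : {x | B * x = B * x₀} ⊆ 𝒳 ∧ Set.InjOn f {x | B * x = B * x₀} := by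
  have hcoset : {x | B * x = B * x₀}.ncard ≤
      Fintype.card F ^ ((Fintype.card ι - Fintype.card κ) * Fintype.card ι') := by
    refine Nat.le_of_mul_le_mul_right
      ((ncard_setOf_mul_eq_mul_mul_card_pow B hB x₀).trans_le ?_) (pow_pos Fintype.card_pos _)
    rw [← pow_add, ← add_mul]
    exact Nat.pow_le_pow_right Fintype.card_pos (Nat.mul_le_mul_right _ (by omega))
  refine Set.subset_and_injOn_of_surjOn_of_ncard_le (Set.toFinite _) ?_ (hcoset.trans hT)
  intro s hs
  obtain ⟨x, hx, hBx, rfl⟩ := H B hB x₀ hx₀ s hs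
  exact ⟨x, ⟨hBx, hx⟩, rfl⟩

theorem CosetsCarryAllMessages.eq_univ (H : CosetsCarryAllMessages κ 𝒳 f T)
    (hT : Fintype.card F ^ ((Fintype.card ι - Fintype.card κ) * Fintype.card ι') ≤ T.ncard)
    (hκι : Fintype.card κ < Fintype.card ι) (h𝒳 : 𝒳.Nonempty) : 𝒳 = Set.univ := by
  classical
  have hadd_rank {d : Matrix ι ι' F} (hd : d.rank ≤ Fintype.card ι - Fintype.card κ)
      {x : Matrix ι ι' F} (hx : x ∈ 𝒳) : x + d ∈ 𝒳 := by
    obtain ⟨B, hB, hBd⟩ := exists_surjective_mulVecLin_mul_eq_zero (κ := κ) d (by omega)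
    exact (H.coset_subset_and_injOn hT hB hx).1 (by simp [Matrix.mul_add, hBd])
  have hadd (d : Matrix ι ι' F) : ∀ x ∈ 𝒳, x + d ∈ 𝒳 := by
    induction d using Matrix.induction_on' with
    | h_zero => simp
    | h_add d₁ d₂ h₁ h₂ => exact fun x hx => add_assoc x d₁ d₂ ▸ h₂ _ (h₁ x hx)
    | h_std_basis i j c =>
      have hrank : (single i j c).rank ≤ ({j} : Finset ι').card :=
        rank_le_card_of_forall_notMem_eq_zero _ {j} fun j' hj' i' =>
          single_apply_of_col_ne i i' (by simpa [eq_comm] using hj') c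
      exact fun x hx => hadd_rank (hrank.trans (by rw [Finset.card_singleton]; omega)) hx
  obtain ⟨x₀, hx₀⟩ := h𝒳
  exact Set.eq_univ_of_forall fun x => add_sub_cancel x₀ x ▸ hadd (x - x₀) x₀ hx₀

theorem CosetsCarryAllMessages.card_le (H : CosetsCarryAllMessages κ 𝒳 f T)
    (hT : Fintype.card F ^ ((Fintype.card ι - Fintype.card κ) * Fintype.card ι') ≤ T.ncard)
    (hκ : 0 < Fintype.card κ) (hκι : Fintype.card κ < Fintype.card ι)
    (hι' : 0 < Fintype.card ι') (h𝒳 : 𝒳.Nonempty) : Fintype.card ι ≤ Fintype.card ι' := by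
  classical
  have huniv := H.eq_univ hT hκι h𝒳
  obtain ⟨s₀, hs₀⟩ : T.Nonempty :=
    Set.nonempty_of_ncard_ne_zero ((pow_pos Fintype.card_pos _).trans_le hT).ne'
  have hcode : ∀ x ∈ f ⁻¹' {s₀}, ∀ y ∈ f ⁻¹' {s₀},
      (x - y).rank ≤ Fintype.card ι - Fintype.card κ → x = y := by
    intro x hx y hy hxy
    obtain ⟨B, hB, hBxy⟩ := exists_surjective_mulVecLin_mul_eq_zero (κ := κ) (x - y) (by omega)
    refine (H.coset_subset_and_injOn hT hB (huniv ▸ Set.mem_univ x)).2 rfl ?_ (hx.trans hy.symm)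
    exact (sub_eq_zero.1 (Matrix.mul_sub B x y ▸ hBxy)).symm
  obtain ⟨B₀, hB₀, -⟩ := exists_surjective_mulVecLin_mul_eq_zero (κ := κ) (0 : Matrix ι ι' F)
    (by rw [rank_zero]; omega)
  have hcover : Set.SurjOn (B₀ * ·) (f ⁻¹' {s₀}) Set.univ := by
    intro y _
    obtain ⟨x₀, rfl⟩ := surjective_mul_left_of_surjective_mulVecLin hB₀ y
    obtain ⟨x, -, hBx, hfx⟩ := H B₀ hB₀ x₀ (huniv ▸ Set.mem_univ x₀) s₀ hs₀
    exact ⟨x, hfx, hBx⟩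
  have hpow : Fintype.card F ^ (Fintype.card κ * Fintype.card ι') ≤
      Fintype.card F ^ (Fintype.card ι * (Fintype.card ι' - (Fintype.card ι - Fintype.card κ))) :=
    calc Fintype.card F ^ (Fintype.card κ * Fintype.card ι')
        = (Set.univ : Set (Matrix κ ι' F)).ncard := by
          rw [Set.ncard_univ, Nat.card_eq_fintype_card, Fintype.card_matrix]
      _ ≤ (f ⁻¹' {s₀}).ncard :=
          hcover.image_eq_of_mapsTo (fun _ _ => trivial) ▸ Set.ncard_image_le (Set.toFinite _)
      _ ≤ _ := ncard_le_of_forall_rank_sub_le_imp_eq _ _ hcode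
  exact Nat.le_of_mul_le_mul_sub_sub hκ hκι hι'
    ((Nat.pow_le_pow_iff_right Fintype.one_lt_card).1 hpow)

end SecureCode

theorem universal_secure_noiseless_requires_long_packets_general
    (q : ℕ) (n m : ℕ) (hm : 0 < m)
    (μ : ℕ) (hμ1 : 1 ≤ μ) (hμn : μ ≤ n - 1)
    (F : Type) [Field F] [Fintype F] (hF : Fintype.card F = q)
    (𝒮 : Type) [Fintype 𝒮]
    (Ω : Type) [Fintype Ω] [MeasurableSpace Ω] [MeasurableSingletonClass Ω]
    (P : Measure Ω) [IsProbabilityMeasure P]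
    (S : Ω → 𝒮) (X : Ω → Matrix (Fin n) (Fin m) F)
    (hent : entropy P S = ((n - μ : ℕ) : ℝ) * (m * Real.log q))
    (hdec : ∃ f : Matrix (Fin n) (Fin m) F → 𝒮, ∀ᵐ ω ∂P, S ω = f (X ω))
    (hsec : ∀ B : Matrix (Fin μ) (Fin n) F,
      mutualInfo P S (fun ω => B * X ω) = 0) :
    n ≤ m := by
  obtain ⟨f, hf⟩ := hdec
  have hT : q ^ ((n - μ) * m) ≤ {s | P {ω | S ω = s} ≠ 0}.ncard := by
    have hq : (0 : ℝ) < q := by rw [← hF]; exact_mod_cast Fintype.card_pos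
    have := exp_entropy_le_ncard P S
    rw [hent, show ((n - μ : ℕ) : ℝ) * (m * Real.log q) = ((n - μ) * m : ℕ) * Real.log q by
      push_cast; ring, Real.exp_nat_mul, Real.exp_log hq] at this
    exact_mod_cast this
  obtain ⟨ω₀, -, hω₀⟩ := exists_measure_singleton_ne_zero P (p := fun _ => True) (by simp)
  have := CosetsCarryAllMessages.card_le (κ := Fin μ) (𝒳 := {x | P {ω | X ω = x} ≠ 0})
    (T := {s | P {ω | S ω = s} ≠ 0})
    (fun B _ x₀ hx₀ s hs => exists_eq_of_mutualInfo_eq_zero P hf (B * ·) (hsec B) hx₀ hs)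
    (by simpa [hF] using hT) (by simp; omega) (by simp; omega) (by simpa using hm)
    ⟨X ω₀, measure_fiber_ne_zero_of_measure_singleton_ne_zero P X hω₀⟩
  simpa using this

/-- Converse for noiseless wiretap networks: if the message `S` has entropy `k = n - μ`
packets, can be recovered from `X` (zero error), and `I(S;BX) = 0` for every
`B ∈ F^{μ×n}` (universal security under `μ` observations), then `m ≥ n`. -/
theorem universal_secure_noiseless_requires_long_packets
    (q : ℕ) (hq : IsPrimePow q) (n m : ℕ) (hn : 0 < n) (hm : 0 < m)
    (μ : ℕ) (hμ1 : 1 ≤ μ) (hμn : μ ≤ n - 1)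
    (F : Type) [Field F] [Fintype F] (hF : Fintype.card F = q)
    (𝒮 : Type) [Fintype 𝒮]
    (Ω : Type) [Fintype Ω] [MeasurableSpace Ω] [MeasurableSingletonClass Ω]
    (P : Measure Ω) [IsProbabilityMeasure P]
    (S : Ω → 𝒮) (X : Ω → Matrix (Fin n) (Fin m) F)
    (hent : entropy P S = ((n - μ : ℕ) : ℝ) * (m * Real.log q))
    (hdec : ∃ f : Matrix (Fin n) (Fin m) F → 𝒮, ∀ᵐ ω ∂P, S ω = f (X ω))
    (hsec : ∀ B : Matrix (Fin μ) (Fin n) F,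
      mutualInfo P S (fun ω => B * X ω) = 0) :
    n ≤ m :=
  universal_secure_noiseless_requires_long_packets_general q n m hm μ hμ1 hμn F hF 𝒮 Ω P S X hent
    hdec hsec
end
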